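/- arXiv:1010.5466 — 8 statements merged into one kernel-verified Lean document; each statement's English description precedes it below -/
import Mathlib

section
/- Let p be an odd prime and n ≥ 12 an integer. Then there exists a positive integer d with 2d+2 ≤ n ≤ 3d and |12d − 5n| ≤ 60 such that the Heisenberg group H = H_1(𝔽_{p^d}) (a group of order p^{3d}) admits a family 𝒮 of subgroups of its center Z(H), each of index p^n in H, with |𝒮| ≥ p^{(n−2d)(3d−n)}/(d(p^d−1)), such that for any two distinct N, N' ∈ 𝒮 the quotient groups H/N and H/N' (each of order p^n) are not isomorphic. -/
set_option linter.unusedSectionVars false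

/-- The generalized Heisenberg group `H_m(K)`: underlying set `K^m × K^m × K` with
multiplication `(u,v,s)·(u',v',s') = (u+u', v+v', s+s'+u·v')`. -/
structure Heisenberg (K : Type*) (m : ℕ) where
  x : Fin m → K
  y : Fin m → K
  z : K

namespace Heisenberg

variable {K : Type*} [Field K] {m : ℕ}

@[ext] lemma ext' {a b : Heisenberg K m} (hx : a.x = b.x) (hy : a.y = b.y) (hz : a.z = b.z) :
    a = b := by cases a; cases b; simp_all

instance : Mul (Heisenberg K m) :=
  ⟨fun a b => ⟨a.x + b.x, a.y + b.y, a.z + b.z + dotProduct a.x b.y⟩⟩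

instance : One (Heisenberg K m) := ⟨⟨0, 0, 0⟩⟩

instance : Inv (Heisenberg K m) :=
  ⟨fun a => ⟨-a.x, -a.y, -a.z + dotProduct a.x a.y⟩⟩

@[simp] lemma mul_x (a b : Heisenberg K m) : (a * b).x = a.x + b.x := rfl
@[simp] lemma mul_y (a b : Heisenberg K m) : (a * b).y = a.y + b.y := rfl
@[simp] lemma mul_z (a b : Heisenberg K m) :
    (a * b).z = a.z + b.z + dotProduct a.x b.y := rfl
@[simp] lemma one_x : (1 : Heisenberg K m).x = 0 := rfl
@[simp] lemma one_y : (1 : Heisenberg K m).y = 0 := rfl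
@[simp] lemma one_z : (1 : Heisenberg K m).z = 0 := rfl
@[simp] lemma inv_x (a : Heisenberg K m) : a⁻¹.x = -a.x := rfl
@[simp] lemma inv_y (a : Heisenberg K m) : a⁻¹.y = -a.y := rfl
@[simp] lemma inv_z (a : Heisenberg K m) : a⁻¹.z = -a.z + dotProduct a.x a.y := rfl

instance instGroup : Group (Heisenberg K m) where
  mul_assoc a b c := by
    ext <;> simp [add_dotProduct, dotProduct_add] <;> ring
  one_mul a := by ext <;> simp
  mul_one a := by ext <;> simp
  inv_mul_cancel a := by
    ext <;> simp [neg_dotProduct]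

end Heisenberg

/-!
The subgroups are `centralSubgroup N = {(0, 0, s) | s ∈ N}` for `𝔽_p`-subspaces `N` of
`K = 𝔽_{p^d}` of dimension `b = 3d - n`. An isomorphism
`H ⧸ centralSubgroup N ≃* H ⧸ centralSubgroup N'` induces an additive bijection `B` of
`K² = H ⧸ Z(H)` and an additive map `A : K → K ⧸ N'` with kernel `N` such that
`A (ω v w) = ω (B v) (B w)`, where `ω` is the commutator form. Pairing with the trace form
shows that `t₀⁻¹ * t` is a multiplier of `B` (i.e. `B (c • v) = t₀⁻¹ * t • B v` for some `c`)
for all `t, t₀ ≠ 0` orthogonal to `N'`. The multipliers form a subfield with at least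
`p ^ (d - b)` elements, hence all of `K`, since a proper subfield has `p ^ m` elements for a
proper divisor `m < d - b` of `d`. So `B` is `σ`-semilinear, `ω (B v) (B w) = Δ * σ (ω v w)`
and `N' = Δ • σ(N)`. Graphs of linear maps give `p ^ (ab)` subspaces of dimension `b`
(`a = n - 2d`), and each class `{c • σ(N)}` has at most `d (p ^ d - 1)` members.
-/

open Module

lemma Nat.two_mul_le_of_dvd_of_lt {m d : ℕ} (hmd : m ∣ d) (hlt : m < d) : 2 * m ≤ d := by
  obtain ⟨k, rfl⟩ := hmd
  have h₀ : k ≠ 0 := by rintro rfl; simp at hlt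
  have h₁ : k ≠ 1 := by rintro rfl; simp at hlt
  nlinarith [show 2 ≤ k by omega]

lemma Nat.three_mul_le_of_dvd_of_lt {m d : ℕ} (hd : Odd d) (hmd : m ∣ d) (hlt : m < d) :
    3 * m ≤ d := by
  obtain ⟨k, rfl⟩ := hmd
  have hk : Odd k := (Nat.odd_mul.1 hd).2
  have h₀ : k ≠ 0 := by rintro rfl; simp at hlt
  have h₁ : k ≠ 1 := by rintro rfl; simp at hlt
  have h₂ : k ≠ 2 := by rintro rfl; exact Nat.not_even_iff_odd.2 hk even_two
  nlinarith [show 3 ≤ k by omega]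

lemma Subfield.eq_top_of_pow_le_card {K : Type*} [Field K] [Finite K] {p d a : ℕ}
    (hp : p.Prime) (hK : Nat.card K = p ^ d) (hdiv : ∀ m, m ∣ d → m < d → m < a)
    (E : Subfield K) (hE : p ^ a ≤ Nat.card E) : E = ⊤ := by
  by_contra hE_top
  obtain ⟨c, hc⟩ := SetLike.exists_not_mem_of_ne_top E hE_top
  have hlt : Nat.card E < Nat.card K := Finite.card_subtype_lt hc
  have hpow : Nat.card K = Nat.card E ^ finrank E K := natCard_eq_pow_finrank
  set k := finrank E K
  have hk : 2 ≤ k := by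
    have : 0 < Nat.card E := Nat.card_pos
    by_contra hk
    interval_cases k
    · rw [pow_zero] at hpow
      omega
    · rw [pow_one] at hpow
      omega
  obtain ⟨m, -, hm⟩ := (Nat.dvd_prime_pow hp).1 (hK ▸ hpow ▸ dvd_pow_self _ (by omega))
  have hm0 : m ≠ 0 := by
    rintro rfl
    rw [hpow, hm, pow_zero, one_pow] at hlt
    exact lt_irrefl 1 hlt
  rw [hm, ← pow_mul, hK] at hpow
  have hd : d = m * k := Nat.pow_right_injective hp.two_le hpow
  have hma : m < a := hdiv m (Dvd.intro k hd.symm) (by rw [hd]; nlinarith [Nat.pos_of_ne_zero hm0])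
  rw [hm] at hE
  have := (Nat.pow_le_pow_iff_right hp.one_lt).1 hE
  omega

namespace AddEquiv

variable {K V : Type*} [Field K] [AddCommGroup V] [Module K V] [Nontrivial V]

variable (K) in
def multipliers (B : V ≃+ V) : Subfield K where
  carrier := {a | ∃ c : K, ∀ v, B (c • v) = a • B v}
  zero_mem' := ⟨0, fun v => by simp⟩
  one_mem' := ⟨1, fun v => by simp⟩
  add_mem' := by
    rintro a b ⟨c, hc⟩ ⟨d, hd⟩
    exact ⟨c + d, fun v => by rw [add_smul, map_add, hc, hd, add_smul]⟩
  mul_mem' := by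
    rintro a b ⟨c, hc⟩ ⟨d, hd⟩
    exact ⟨c * d, fun v => by rw [mul_smul, hc, hd, mul_smul]⟩
  neg_mem' := by
    rintro a ⟨c, hc⟩
    exact ⟨-c, fun v => by rw [neg_smul, map_neg, hc, neg_smul]⟩
  inv_mem' := by
    rintro a ⟨c, hc⟩
    rcases eq_or_ne a 0 with rfl | ha
    · exact ⟨0, fun v => by simp⟩
    have hc0 : c ≠ 0 := by
      rintro rfl
      obtain ⟨w, hw⟩ := exists_ne (0 : V)
      have h := hc (B.symm w)
      rw [zero_smul, map_zero, B.apply_symm_apply] at h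
      exact hw ((smul_eq_zero.1 h.symm).resolve_left ha)
    refine ⟨c⁻¹, fun v => ?_⟩
    rw [eq_inv_smul_iff₀ ha, ← hc, smul_inv_smul₀ hc0]

lemma mem_multipliers {B : V ≃+ V} {a : K} :
    a ∈ multipliers K B ↔ ∃ c : K, ∀ v, B (c • v) = a • B v :=
  Iff.rfl

lemma exists_ringEquiv_of_multipliers_eq_top [Finite K] (B : V ≃+ V)
    (hB : multipliers K B = ⊤) :
    ∃ σ : K ≃+* K, ∀ (c : K) (v : V), B (c • v) = σ c • B v := by
  have h : ∀ a : K, ∃ c : K, ∀ v, B (c • v) = a • B v := fun a =>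
    mem_multipliers.1 (by rw [hB]; exact Subfield.mem_top a)
  choose τ hτ using h
  obtain ⟨w, hw⟩ := exists_ne (0 : V)
  have hτ_eq : ∀ a c : K, (∀ v, B (c • v) = a • B v) → τ a = c := fun a c hc =>
    smul_left_injective K hw (B.injective (by rw [hτ, hc]))
  let τ' : K →+* K :=
    { toFun := τ
      map_one' := hτ_eq 1 1 fun v => by simp
      map_mul' := fun a b => hτ_eq _ _ fun v => by rw [mul_smul, hτ, hτ, mul_smul]
      map_zero' := hτ_eq 0 0 fun v => by simp
      map_add' := fun a b => hτ_eq _ _ fun v => by rw [add_smul, map_add, hτ, hτ, add_smul] }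
  let τe := RingEquiv.ofBijective τ' (Finite.injective_iff_bijective.1 τ'.injective)
  refine ⟨τe.symm, fun c v => ?_⟩
  have h := hτ (τe.symm c) v
  rwa [show τ (τe.symm c) = c from τe.apply_symm_apply c] at h

end AddEquiv

lemma Submodule.exists_finset_finrank_eq {F V : Type*} [Field F] [Fintype F] [AddCommGroup V]
    [Module F V] [FiniteDimensional F V] {a b : ℕ} (h : finrank F V = b + a) :
    ∃ G : Finset (Submodule F V),
      G.card = Fintype.card F ^ (a * b) ∧ ∀ W ∈ G, finrank F W = b := by
  classical
  let e : V ≃ₗ[F] (Fin b → F) × (Fin a → F) := LinearEquiv.ofFinrankEq _ _ (by simp [h])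
  let graphOf (A : Matrix (Fin a) (Fin b) F) : Submodule F V :=
    (LinearMap.graph (Matrix.toLin' A)).map (e.symm : _ →ₗ[F] V)
  have hinj : Function.Injective graphOf := by
    intro A A' hAA'
    have hgraph := Submodule.map_injective_of_injective e.symm.injective hAA'
    refine Matrix.toLin'.injective (LinearMap.ext fun x => ?_)
    have hx : (x, Matrix.toLin' A x) ∈ LinearMap.graph (Matrix.toLin' A') :=
      hgraph ▸ (LinearMap.mem_graph_iff _ _).2 rfl
    exact (LinearMap.mem_graph_iff _ _).1 hx
  refine ⟨Finset.univ.image graphOf, ?_, ?_⟩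
  · rw [Finset.card_image_of_injective _ hinj, Finset.card_univ]
    change Fintype.card (Fin a → Fin b → F) = _
    simp [← pow_mul, mul_comm]
  · intro W hW
    obtain ⟨A, -, rfl⟩ := Finset.mem_image.1 hW
    rw [LinearEquiv.finrank_map_eq, LinearMap.graph_eq_range_prod,
      LinearMap.finrank_range_of_inj fun x y hxy => congrArg Prod.fst hxy, finrank_fin_fun]

lemma Submodule.index_toAddSubgroup_eq_pow {p : ℕ} [Fact p.Prime] {V : Type*} [AddCommGroup V]
    [Module (ZMod p) V] [Finite V] (W : Submodule (ZMod p) V) :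
    W.toAddSubgroup.index = p ^ (finrank (ZMod p) V - finrank (ZMod p) W) := by
  rw [AddSubgroup.index, show Nat.card (V ⧸ W.toAddSubgroup) = Nat.card (V ⧸ W) from rfl,
    natCard_eq_pow_finrank (K := ZMod p), Nat.card_zmod, ← W.finrank_quotient_add_finrank,
    Nat.add_sub_cancel]

namespace Heisenberg

section HeisenbergGroup

variable {K : Type*} [Field K]

section Coordinates

def of (v : K × K) (s : K) : Heisenberg K 1 := ⟨fun _ => v.1, fun _ => v.2, s⟩

def xy (g : Heisenberg K 1) : K × K := (g.x 0, g.y 0)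

@[simp] lemma xy_of (v : K × K) (s : K) : (of v s).xy = v := rfl

@[simp] lemma z_of (v : K × K) (s : K) : (of v s).z = s := rfl

@[simp] lemma of_xy_z (g : Heisenberg K 1) : of g.xy g.z = g := by
  refine ext' ?_ ?_ rfl <;> funext i <;> simp [of, xy, Subsingleton.elim i 0]

@[simp] lemma xy_mul (g h : Heisenberg K 1) : (g * h).xy = g.xy + h.xy := rfl

@[simp] lemma xy_one : (1 : Heisenberg K 1).xy = 0 := rfl

@[simp] lemma xy_inv (g : Heisenberg K 1) : g⁻¹.xy = -g.xy := rfl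

lemma z_mul (g h : Heisenberg K 1) : (g * h).z = g.z + h.z + g.xy.1 * h.xy.2 := by
  simp [xy, dotProduct]

lemma z_inv (g : Heisenberg K 1) : g⁻¹.z = -g.z + g.xy.1 * g.xy.2 := by
  simp [xy, dotProduct]

lemma of_mul_of (v w : K × K) (s t : K) :
    of v s * of w t = of (v + w) (s + t + v.1 * w.2) := by
  rw [← of_xy_z (of v s * of w t), xy_mul, z_mul]
  rfl

def equivProd : Heisenberg K 1 ≃ (K × K) × K where
  toFun g := (g.xy, g.z)
  invFun u := of u.1 u.2
  left_inv := of_xy_z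
  right_inv _ := rfl

lemma natCard_eq : Nat.card (Heisenberg K 1) = Nat.card K ^ 3 := by
  rw [Nat.card_congr equivProd, Nat.card_prod, Nat.card_prod]
  ring

end Coordinates

section SymplecticForm

def symplecticForm (v w : K × K) : K := v.1 * w.2 - w.1 * v.2

lemma symplecticForm_surjective {v : K × K} (hv : v ≠ 0) :
    Function.Surjective (symplecticForm v) := by
  intro s
  by_cases h₁ : v.1 = 0
  · have h₂ : v.2 ≠ 0 := fun h₂ => hv (Prod.ext h₁ h₂)
    exact ⟨(-(s / v.2), 0), by simp [symplecticForm, h₂]⟩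
  · exact ⟨(0, s / v.1), by simp [symplecticForm, h₁, mul_div_cancel₀]⟩

@[simp] lemma symplecticForm_fst_snd (s : K) : symplecticForm (1, 0) (0, s) = s := by
  simp [symplecticForm]

lemma of_mul_of_eq_mul_commutator (v w : K × K) :
    of v 0 * of w 0 = of w 0 * of v 0 * of 0 (symplecticForm v w) := by
  simp only [of_mul_of, symplecticForm, Prod.snd_zero, mul_zero, add_zero, zero_add]
  congr 1
  · abel
  · ring

lemma symplecticForm_smul_left (c : K) (v w : K × K) :
    symplecticForm (c • v) w = c * symplecticForm v w := by
  simp only [symplecticForm, Prod.smul_fst, Prod.smul_snd, smul_eq_mul]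
  ring

lemma symplecticForm_sub_left (u v w : K × K) :
    symplecticForm (u - v) w = symplecticForm u w - symplecticForm v w := by
  simp only [symplecticForm, Prod.fst_sub, Prod.snd_sub]
  ring

lemma symplecticForm_map_of_semilinear {σ : K →+* K} (B : K × K ≃+ K × K)
    (hB : ∀ (c : K) v, B (c • v) = σ c • B v) (v w : K × K) :
    symplecticForm (B v) (B w) =
      symplecticForm (B (1, 0)) (B (0, 1)) * σ (symplecticForm v w) := by
  have hexp : ∀ u : K × K, B u = σ u.1 • B (1, 0) + σ u.2 • B (0, 1) := by
    intro u
    conv_lhs => rw [show u = u.1 • ((1, 0) : K × K) + u.2 • (0, 1) by ext <;> simp]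
    rw [map_add, hB, hB]
  rw [hexp v, hexp w]
  simp only [symplecticForm, Prod.fst_add, Prod.snd_add, Prod.smul_fst, Prod.smul_snd,
    smul_eq_mul, map_sub, map_mul]
  ring

def IsSymplecticPair {N : AddSubgroup K} (B : K × K → K × K) (A : K →+ K ⧸ N) : Prop :=
  ∀ v w, A (symplecticForm v w) = (symplecticForm (B v) (B w) : K)

end SymplecticForm

section CentralQuotient

def centralSubgroup (N : AddSubgroup K) : Subgroup (Heisenberg K 1) where
  carrier := {g | g.xy = 0 ∧ g.z ∈ N}
  one_mem' := ⟨rfl, N.zero_mem⟩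
  mul_mem' := by
    rintro g h ⟨hg, hgN⟩ ⟨hh, hhN⟩
    refine ⟨by simp [hg, hh], ?_⟩
    rw [z_mul, hg]
    simpa using N.add_mem hgN hhN
  inv_mem' := by
    rintro g ⟨hg, hgN⟩
    refine ⟨by simp [hg], ?_⟩
    rw [z_inv, hg]
    simpa using N.neg_mem hgN

variable {N : AddSubgroup K}

lemma mem_centralSubgroup {g : Heisenberg K 1} :
    g ∈ centralSubgroup N ↔ g.xy = 0 ∧ g.z ∈ N :=
  Iff.rfl

lemma of_zero_mem_centralSubgroup {s : K} : of 0 s ∈ centralSubgroup N ↔ s ∈ N := by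
  simp [mem_centralSubgroup]

lemma centralSubgroup_injective :
    Function.Injective (centralSubgroup : AddSubgroup K → Subgroup (Heisenberg K 1)) :=
  fun N N' h => AddSubgroup.ext fun s => by
    rw [← of_zero_mem_centralSubgroup, h, of_zero_mem_centralSubgroup]

lemma centralSubgroup_le_center (N : AddSubgroup K) :
    centralSubgroup N ≤ Subgroup.center (Heisenberg K 1) := by
  rintro g ⟨hg, -⟩
  rw [Subgroup.mem_center_iff]
  intro h
  refine ext' (add_comm _ _) (add_comm _ _) ?_
  rw [z_mul, z_mul, hg]
  simp [add_comm]

lemma of_zero_mem_center (s : K) : of 0 s ∈ Subgroup.center (Heisenberg K 1) :=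
  centralSubgroup_le_center ⊤ (of_zero_mem_centralSubgroup.2 (AddSubgroup.mem_top s))

instance (N : AddSubgroup K) : (centralSubgroup N).Normal where
  conj_mem g hg h := by
    rw [Subgroup.mem_center_iff.1 (centralSubgroup_le_center N hg) h, mul_inv_cancel_right]
    exact hg

lemma natCard_centralSubgroup (N : AddSubgroup K) : Nat.card (centralSubgroup N) = Nat.card N :=
  Nat.card_congr
    { toFun g := ⟨g.1.z, g.2.2⟩
      invFun s := ⟨of 0 s, of_zero_mem_centralSubgroup.2 s.2⟩
      left_inv g := Subtype.ext <| by rw [← of_xy_z g.1, g.2.1]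
      right_inv _ := rfl }

lemma index_centralSubgroup [Finite K] (N : AddSubgroup K) :
    (centralSubgroup N).index = Nat.card K ^ 2 * N.index := by
  have h₁ := (centralSubgroup N).card_mul_index
  rw [natCard_centralSubgroup, natCard_eq] at h₁
  refine Nat.eq_of_mul_eq_mul_left (Nat.card_pos (α := N)) ?_
  rw [h₁, mul_left_comm, N.card_mul_index]
  ring

lemma mk_eq_mk_iff (g h : Heisenberg K 1) :
    (g : Heisenberg K 1 ⧸ centralSubgroup N) = h ↔ g.xy = h.xy ∧ h.z - g.z ∈ N := by
  rw [QuotientGroup.eq, mem_centralSubgroup, xy_mul, xy_inv, neg_add_eq_zero]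
  refine and_congr_right fun hxy => ?_
  rw [z_mul, z_inv, xy_inv, hxy, Prod.fst_neg]
  ring_nf

lemma commute_mk_iff (g h : Heisenberg K 1) :
    Commute (g : Heisenberg K 1 ⧸ centralSubgroup N) h ↔ symplecticForm g.xy h.xy ∈ N := by
  rw [Commute, SemiconjBy, ← QuotientGroup.mk_mul, ← QuotientGroup.mk_mul, mk_eq_mk_iff,
    ← N.neg_mem_iff]
  simp only [xy_mul, add_comm, true_and, z_mul, symplecticForm]
  ring_nf

lemma mk_mem_center {g : Heisenberg K 1} (hg : g ∈ Subgroup.center _) :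
    (g : Heisenberg K 1 ⧸ centralSubgroup N) ∈ Subgroup.center _ :=
  Subgroup.mem_center_iff.2 fun q => by
    induction q using QuotientGroup.induction_on with | H h => ?_
    rw [← QuotientGroup.mk_mul, ← QuotientGroup.mk_mul, Subgroup.mem_center_iff.1 hg]

lemma mk_mem_center_iff (hN : N ≠ ⊤) (g : Heisenberg K 1) :
    (g : Heisenberg K 1 ⧸ centralSubgroup N) ∈ Subgroup.center _ ↔ g.xy = 0 := by
  refine ⟨fun hg => ?_, fun hg => Subgroup.mem_center_iff.2 fun q => ?_⟩
  · by_contra hxy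
    refine hN (eq_top_iff.2 fun s _ => ?_)
    obtain ⟨w, rfl⟩ := symplecticForm_surjective hxy s
    exact (commute_mk_iff g (of w 0)).1 (Subgroup.mem_center_iff.1 hg _).symm
  · obtain ⟨h, rfl⟩ := QuotientGroup.mk_surjective q
    exact ((commute_mk_iff g h).2 (by simp [hg, symplecticForm])).symm

end CentralQuotient

section QuotientCoordinates

variable {N : AddSubgroup K}

noncomputable def quotXY (q : Heisenberg K 1 ⧸ centralSubgroup N) : K × K := q.out.xy

noncomputable def quotZ (q : Heisenberg K 1 ⧸ centralSubgroup N) : K ⧸ N := q.out.z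

@[simp] lemma quotXY_mk (g : Heisenberg K 1) :
    quotXY (g : Heisenberg K 1 ⧸ centralSubgroup N) = g.xy :=
  ((mk_eq_mk_iff _ _).1 (QuotientGroup.out_eq' _)).1

@[simp] lemma quotZ_mk (g : Heisenberg K 1) :
    quotZ (g : Heisenberg K 1 ⧸ centralSubgroup N) = (g.z : K ⧸ N) :=
  (QuotientAddGroup.eq_iff_sub_mem.2 ((mk_eq_mk_iff _ _).1 (QuotientGroup.out_eq' _)).2).symm

lemma quotXY_mul (q r : Heisenberg K 1 ⧸ centralSubgroup N) :
    quotXY (q * r) = quotXY q + quotXY r := by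
  induction q using QuotientGroup.induction_on
  induction r using QuotientGroup.induction_on
  simp [← QuotientGroup.mk_mul]

lemma quotZ_mul (q r : Heisenberg K 1 ⧸ centralSubgroup N) :
    quotZ (q * r) = quotZ q + quotZ r + (((quotXY q).1 * (quotXY r).2 : K) : K ⧸ N) := by
  induction q using QuotientGroup.induction_on
  induction r using QuotientGroup.induction_on
  rw [← QuotientGroup.mk_mul, quotZ_mk, quotZ_mk, quotZ_mk, quotXY_mk, quotXY_mk, z_mul,
    QuotientAddGroup.mk_add, QuotientAddGroup.mk_add]

lemma eq_one_iff_quotXY_quotZ (q : Heisenberg K 1 ⧸ centralSubgroup N) :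
    q = 1 ↔ quotXY q = 0 ∧ quotZ q = 0 := by
  induction q using QuotientGroup.induction_on
  rw [← QuotientGroup.mk_one, mk_eq_mk_iff]
  simp [QuotientAddGroup.eq_zero_iff]

lemma mem_center_iff_quotXY (hN : N ≠ ⊤) (q : Heisenberg K 1 ⧸ centralSubgroup N) :
    q ∈ Subgroup.center _ ↔ quotXY q = 0 := by
  induction q using QuotientGroup.induction_on
  rw [mk_mem_center_iff hN, quotXY_mk]

end QuotientCoordinates

section Isomorphism

variable {N N' : AddSubgroup K}
  (e : Heisenberg K 1 ⧸ centralSubgroup N ≃* Heisenberg K 1 ⧸ centralSubgroup N')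

noncomputable def xyMap (v : K × K) : K × K := quotXY (e (of v 0))

noncomputable def zMap (s : K) : K ⧸ N' := quotZ (e (of 0 s))

variable {e}

lemma quotXY_map_eq_zero_iff (hN : N ≠ ⊤) (hN' : N' ≠ ⊤) (g : Heisenberg K 1) :
    quotXY (e g) = 0 ↔ g.xy = 0 := by
  rw [← mem_center_iff_quotXY hN', ← mk_mem_center_iff hN]
  exact MulEquivClass.apply_mem_center_iff e

lemma quotXY_map_of_zero (hN' : N' ≠ ⊤) (s : K) : quotXY (e (of 0 s)) = 0 := by
  rw [← mem_center_iff_quotXY hN']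
  exact (MulEquivClass.apply_mem_center_iff e).2 (mk_mem_center (of_zero_mem_center s))

lemma quotXY_map_eq_xyMap (hN' : N' ≠ ⊤) (g : Heisenberg K 1) :
    quotXY (e g) = xyMap e g.xy := by
  have hg : of g.xy 0 * of 0 g.z = g := by simp [of_mul_of]
  calc quotXY (e g) = quotXY (e ↑(of g.xy 0 * of 0 g.z)) := by rw [hg]
    _ = xyMap e g.xy := by
      rw [QuotientGroup.mk_mul, map_mul, quotXY_mul, quotXY_map_of_zero hN', add_zero]
      rfl

lemma xyMap_add (hN' : N' ≠ ⊤) (v w : K × K) : xyMap e (v + w) = xyMap e v + xyMap e w := by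
  have h := quotXY_map_eq_xyMap (e := e) hN' (of v 0 * of w 0)
  rw [QuotientGroup.mk_mul, map_mul, quotXY_mul, xy_mul, xy_of, xy_of] at h
  exact h.symm

lemma xyMap_eq_zero_iff (hN : N ≠ ⊤) (hN' : N' ≠ ⊤) (v : K × K) :
    xyMap e v = 0 ↔ v = 0 :=
  quotXY_map_eq_zero_iff hN hN' (of v 0)

lemma xyMap_surjective (hN' : N' ≠ ⊤) : Function.Surjective (xyMap e) := by
  intro w
  obtain ⟨g, hg⟩ := QuotientGroup.mk_surjective (e.symm (of w 0))
  exact ⟨g.xy, by rw [← quotXY_map_eq_xyMap hN', hg, e.apply_symm_apply, quotXY_mk, xy_of]⟩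

lemma zMap_add (hN' : N' ≠ ⊤) (s t : K) : zMap e (s + t) = zMap e s + zMap e t := by
  have h : (of 0 (s + t) : Heisenberg K 1) = of 0 s * of 0 t := by simp [of_mul_of]
  rw [zMap, h, QuotientGroup.mk_mul, map_mul, quotZ_mul, quotXY_map_of_zero hN']
  simp [zMap]

lemma zMap_eq_zero_iff (hN' : N' ≠ ⊤) (s : K) : zMap e s = 0 ↔ s ∈ N := by
  rw [← of_zero_mem_centralSubgroup, ← QuotientGroup.eq_one_iff, ← e.map_eq_one_iff,
    eq_one_iff_quotXY_quotZ, quotXY_map_of_zero hN']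
  exact (and_iff_right rfl).symm

lemma zMap_symplecticForm (hN' : N' ≠ ⊤) (v w : K × K) :
    zMap e (symplecticForm v w) = ((symplecticForm (xyMap e v) (xyMap e w) : K) : K ⧸ N') := by
  have h : quotZ (e (of v 0)) + quotZ (e (of w 0))
        + (((xyMap e v).1 * (xyMap e w).2 : K) : K ⧸ N') =
      quotZ (e (of w 0)) + quotZ (e (of v 0))
        + (((xyMap e w).1 * (xyMap e v).2 : K) : K ⧸ N') + zMap e (symplecticForm v w) := by
    have h := congrArg (fun g : Heisenberg K 1 => quotZ (e g)) (of_mul_of_eq_mul_commutator v w)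
    simp only [QuotientGroup.mk_mul, map_mul, quotZ_mul, quotXY_mul, quotXY_map_of_zero hN',
      Prod.snd_zero, mul_zero, QuotientAddGroup.mk_zero, add_zero] at h
    exact h
  conv_rhs => rw [symplecticForm, QuotientAddGroup.mk_sub]
  rw [eq_sub_iff_add_eq]
  apply add_left_cancel (a := quotZ (e (of v 0)) + quotZ (e (of w 0)))
  rw [h]
  abel

theorem exists_symplectic_pair (hN : N ≠ ⊤) (hN' : N' ≠ ⊤)
    (e : Heisenberg K 1 ⧸ centralSubgroup N ≃* Heisenberg K 1 ⧸ centralSubgroup N') :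
    ∃ (B : K × K ≃+ K × K) (A : K →+ K ⧸ N'),
      (∀ s, A s = 0 ↔ s ∈ N) ∧ IsSymplecticPair B A := by
  let B := AddMonoidHom.mk' (xyMap e) (xyMap_add hN')
  have hB : Function.Bijective B :=
    ⟨(injective_iff_map_eq_zero B).2 fun v => (xyMap_eq_zero_iff hN hN' v).1,
      xyMap_surjective hN'⟩
  exact ⟨AddEquiv.ofBijective B hB, AddMonoidHom.mk' (zMap e) (zMap_add hN'),
    zMap_eq_zero_iff hN', zMap_symplecticForm hN'⟩

end Isomorphism

end HeisenbergGroup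

section SemilinearSimilarity

variable {p : ℕ} {K : Type*} [Field K] [Algebra (ZMod p) K]

def scaledAut (σ : K ≃ₐ[ZMod p] K) (c : Kˣ) : K ≃ₗ[ZMod p] K :=
  σ.toLinearEquiv.trans (c.mulLeftLinearEquiv (ZMod p) K)

@[simp] lemma scaledAut_apply (σ : K ≃ₐ[ZMod p] K) (c : Kˣ) (w : K) :
    scaledAut σ c w = c * σ w :=
  rfl

lemma scaledAut_symm (σ : K ≃ₐ[ZMod p] K) (c : Kˣ) :
    (scaledAut σ c).symm = scaledAut σ.symm (Units.map (σ.symm : K →* K) c⁻¹) := by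
  ext w
  rw [LinearEquiv.symm_apply_eq, scaledAut_apply, scaledAut_apply, Units.coe_map, map_mul,
    MonoidHom.coe_coe, AlgEquiv.apply_symm_apply, AlgEquiv.apply_symm_apply,
    Units.mul_inv_cancel_left]

lemma scaledAut_trans (σ₁ σ₂ : K ≃ₐ[ZMod p] K) (c₁ c₂ : Kˣ) :
    (scaledAut σ₁ c₁).trans (scaledAut σ₂ c₂) =
      scaledAut (σ₁.trans σ₂) (c₂ * Units.map (σ₂ : K →* K) c₁) := by
  ext w
  simp [mul_assoc]

variable (p K) in
def scaledAutSetoid : Setoid (Submodule (ZMod p) K) where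
  r N N' := ∃ (σ : K ≃ₐ[ZMod p] K) (c : Kˣ),
    N.map (scaledAut σ c : K →ₗ[ZMod p] K) = N'
  iseqv :=
    { refl N := ⟨AlgEquiv.refl, 1, by ext; simp [scaledAut_symm]⟩
      symm := by
        rintro N N' ⟨σ, c, rfl⟩
        refine ⟨σ.symm, Units.map (σ.symm : K →* K) c⁻¹, ?_⟩
        rw [← scaledAut_symm, Submodule.map_symm_eq_iff]
      trans := by
        rintro N N' N'' ⟨σ₁, c₁, rfl⟩ ⟨σ₂, c₂, rfl⟩
        refine ⟨σ₁.trans σ₂, c₂ * Units.map (σ₂ : K →* K) c₁, ?_⟩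
        rw [← scaledAut_trans, LinearEquiv.coe_trans, Submodule.map_comp] }

lemma finrank_eq_of_scaledAutSetoid {N N' : Submodule (ZMod p) K}
    (h : (scaledAutSetoid p K).r N N') :
    finrank (ZMod p) N = finrank (ZMod p) N' := by
  obtain ⟨σ, c, rfl⟩ := h
  exact (LinearEquiv.finrank_map_eq _ _).symm

open Classical in
lemma card_le_card_image_scaledAutSetoid_mul [Finite K] (G : Finset (Submodule (ZMod p) K)) :
    G.card ≤ (G.image (Quotient.mk (scaledAutSetoid p K))).card *
      (Nat.card (K ≃ₐ[ZMod p] K) * Nat.card Kˣ) := by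
  have := Fintype.ofFinite ((K ≃ₐ[ZMod p] K) × Kˣ)
  rw [mul_comm]
  refine Finset.card_le_mul_card_image _ _ fun q _ => ?_
  calc (G.filter (Quotient.mk _ · = q)).card
      ≤ (Finset.univ.image fun x : (K ≃ₐ[ZMod p] K) × Kˣ =>
          q.out.map (scaledAut x.1 x.2 : K →ₗ[ZMod p] K)).card := by
        refine Finset.card_le_card fun N hN => ?_
        obtain ⟨σ, c, hσc⟩ :=
          Quotient.exact ((Finset.mem_filter.1 hN).2.trans q.out_eq.symm).symm
        exact Finset.mem_image.2 ⟨(σ, c), Finset.mem_univ _, hσc⟩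
    _ ≤ Nat.card (K ≃ₐ[ZMod p] K) * Nat.card Kˣ := by
        rw [← Nat.card_prod, Nat.card_eq_fintype_card]
        exact Finset.card_image_le

end SemilinearSimilarity

section Rigidity

variable {p : ℕ} [Fact p.Prime] {K : Type*} [Field K] [Finite K] [Algebra (ZMod p) K]

lemma eq_zero_of_forall_trace_mul_symplecticForm {B : K × K → K × K}
    (hB : Function.Surjective B) {t : K}
    (ht : ∀ v w, Algebra.trace (ZMod p) K (t * symplecticForm (B v) (B w)) = 0) : t = 0 := by
  refine (traceForm_nondegenerate (ZMod p) K).1 t fun s => ?_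
  obtain ⟨v, hv⟩ := hB (1, 0)
  obtain ⟨w, hw⟩ := hB (0, s)
  simpa [hv, hw] using ht v w

lemma exists_trace_mul_symplecticForm_eq {N' : Submodule (ZMod p) K} (B : K × K → K × K)
    (A : K →+ K ⧸ N'.toAddSubgroup) (hA : IsSymplecticPair B A) {t : K}
    (ht : t ∈ (Algebra.traceForm (ZMod p) K).orthogonal N') :
    ∃ g : K, ∀ v w, Algebra.trace (ZMod p) K (t * symplecticForm (B v) (B w)) =
      Algebra.trace (ZMod p) K (g * symplecticForm v w) := by
  let χ : K ⧸ N'.toAddSubgroup →+ ZMod p :=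
    QuotientAddGroup.lift _ (Algebra.traceForm (ZMod p) K t).toAddMonoidHom fun s hs => by
      simpa [mul_comm] using (LinearMap.BilinForm.mem_orthogonal_iff.1 ht) s hs
  obtain ⟨g, hg⟩ :=
    ((Algebra.traceForm (ZMod p) K).toDual (traceForm_nondegenerate (ZMod p) K)).surjective
      ((χ.comp A).toZModLinearMap p)
  refine ⟨g, fun v w => ?_⟩
  have h := LinearMap.congr_fun hg (symplecticForm v w)
  rw [LinearMap.BilinForm.toDual_def, Algebra.traceForm_apply] at h
  rw [h]
  simp [χ, hA v w]

lemma eq_zero_of_forall_trace_mul_symplecticForm_left {g : K} (hg : g ≠ 0) {u : K × K}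
    (h : ∀ w, Algebra.trace (ZMod p) K (g * symplecticForm u w) = 0) : u = 0 := by
  by_contra hu
  refine hg ((traceForm_nondegenerate (ZMod p) K).1 g fun s => ?_)
  obtain ⟨w, rfl⟩ := symplecticForm_surjective hu s
  simpa using h w

section Multipliers

variable {N' : Submodule (ZMod p) K} (B : K × K ≃+ K × K) (A : K →+ K ⧸ N'.toAddSubgroup)

lemma inv_mul_mem_multipliers (hA : IsSymplecticPair B A) {t₁ t₂ : K}
    (ht₁ : t₁ ∈ (Algebra.traceForm (ZMod p) K).orthogonal N')
    (ht₂ : t₂ ∈ (Algebra.traceForm (ZMod p) K).orthogonal N') (h₁ : t₁ ≠ 0) :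
    t₁⁻¹ * t₂ ∈ AddEquiv.multipliers K B := by
  obtain ⟨g₁, hg₁⟩ := exists_trace_mul_symplecticForm_eq B A hA ht₁
  obtain ⟨g₂, hg₂⟩ := exists_trace_mul_symplecticForm_eq B A hA ht₂
  have hg₁0 : g₁ ≠ 0 := by
    rintro rfl
    exact h₁ (eq_zero_of_forall_trace_mul_symplecticForm B.surjective fun v w => by
      rw [hg₁, zero_mul, map_zero])
  refine ⟨g₁⁻¹ * g₂, fun v => ?_⟩
  set u := B.symm ((t₁⁻¹ * t₂) • B v)
  suffices (g₁⁻¹ * g₂) • v = u by rw [this, B.apply_symm_apply]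
  rw [← sub_eq_zero]
  -- Both vectors pair identically with every `w` under `(x, w) ↦ tr (g₁ * ω x w)`.
  refine eq_zero_of_forall_trace_mul_symplecticForm_left (p := p) hg₁0 fun w => ?_
  rw [symplecticForm_sub_left, symplecticForm_smul_left, mul_sub, ← mul_assoc,
    mul_inv_cancel_left₀ hg₁0, map_sub, ← hg₂, ← hg₁, B.apply_symm_apply,
    symplecticForm_smul_left, ← mul_assoc, mul_inv_cancel_left₀ h₁, sub_self]

lemma pow_le_card_multipliers (hA : IsSymplecticPair B A) {a : ℕ}
    (ha : finrank (ZMod p) N' + a ≤ finrank (ZMod p) K) :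
    p ^ a ≤ Nat.card (AddEquiv.multipliers K B) := by
  set O := (Algebra.traceForm (ZMod p) K).orthogonal N'
  have hO : p ^ a ≤ Nat.card O := by
    rw [natCard_eq_pow_finrank (K := ZMod p), Nat.card_zmod,
      LinearMap.BilinForm.finrank_orthogonal (traceForm_nondegenerate (ZMod p) K)]
    exact Nat.pow_le_pow_right (Fact.out : p.Prime).pos (by omega)
  by_cases hO0 : O = ⊥
  · rw [hO0, Nat.card_unique] at hO
    exact hO.trans Nat.card_pos
  obtain ⟨t₀, ht₀, ht₀0⟩ := Submodule.exists_mem_ne_zero_of_ne_bot hO0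
  let f : O → B.multipliers K := fun t =>
    ⟨t₀⁻¹ * t, inv_mul_mem_multipliers B A hA ht₀ t.2 ht₀0⟩
  exact hO.trans (Nat.card_le_card_of_injective f fun t t' h =>
    Subtype.ext (mul_left_cancel₀ (inv_ne_zero ht₀0) (congrArg Subtype.val h)))

end Multipliers

theorem scaledAutSetoid_rel_of_symplectic {a : ℕ}
    (hdiv : ∀ m, m ∣ finrank (ZMod p) K → m < finrank (ZMod p) K → m < a)
    {N N' : Submodule (ZMod p) K}
    (ha : finrank (ZMod p) N' + a ≤ finrank (ZMod p) K)
    (B : K × K ≃+ K × K) (A : K →+ K ⧸ N'.toAddSubgroup) (hker : ∀ s, A s = 0 ↔ s ∈ N)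
    (hA : IsSymplecticPair B A) :
    (scaledAutSetoid p K).r N N' := by
  have hK : Nat.card K = p ^ finrank (ZMod p) K := by
    rw [natCard_eq_pow_finrank (K := ZMod p), Nat.card_zmod]
  obtain ⟨σ, hσ⟩ := AddEquiv.exists_ringEquiv_of_multipliers_eq_top B
    (Subfield.eq_top_of_pow_le_card Fact.out hK hdiv _ (pow_le_card_multipliers B A hA ha))
  have hω := symplecticForm_map_of_semilinear (σ := σ) B hσ
  set Δ := symplecticForm (B (1, 0)) (B (0, 1))
  have hΔ : Δ ≠ 0 := by
    obtain ⟨v, hv⟩ := B.surjective (1, 0)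
    obtain ⟨w, hw⟩ := B.surjective (0, 1)
    intro h
    simpa [hv, hw, h] using hω v w
  let σ' : K ≃ₐ[ZMod p] K := AlgEquiv.ofRingEquiv (f := σ) fun x =>
    DFunLike.congr_fun (RingHom.ext_zmod ((σ : K →+* K).comp (algebraMap (ZMod p) K)) _) x
  refine ⟨σ', Units.mk0 Δ hΔ, ?_⟩
  have hN : N = N'.comap (scaledAut σ' (Units.mk0 Δ hΔ) : K →ₗ[ZMod p] K) := by
    -- `s ∈ N ↔ A (ω (1, 0) (0, s)) = 0 ↔ Δ * σ s ∈ N'`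
    ext s
    rw [← hker, Submodule.mem_comap, ← symplecticForm_fst_snd s, hA _ _, hω,
      QuotientAddGroup.eq_zero_iff, symplecticForm_fst_snd]
    rfl
  rw [hN, Submodule.map_comap_eq_of_surjective (scaledAut _ _).surjective]

theorem scaledAutSetoid_rel_of_mulEquiv {a : ℕ}
    (hdiv : ∀ m, m ∣ finrank (ZMod p) K → m < finrank (ZMod p) K → m < a)
    {N N' : Submodule (ZMod p) K} (hN : N.toAddSubgroup ≠ ⊤) (hN' : N'.toAddSubgroup ≠ ⊤)
    (ha : finrank (ZMod p) N' + a ≤ finrank (ZMod p) K)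
    (e : Heisenberg K 1 ⧸ centralSubgroup N.toAddSubgroup ≃*
      Heisenberg K 1 ⧸ centralSubgroup N'.toAddSubgroup) :
    (scaledAutSetoid p K).r N N' := by
  obtain ⟨B, A, hker, hA⟩ := exists_symplectic_pair hN hN' e
  exact scaledAutSetoid_rel_of_symplectic hdiv ha B A hker hA

theorem exists_finset_centralSubgroup_nonisomorphic {a b : ℕ} (ha : 0 < a)
    (hab : a + b = finrank (ZMod p) K)
    (hdiv : ∀ m, m ∣ finrank (ZMod p) K → m < finrank (ZMod p) K → m < a) :
    ∃ 𝒮 : Finset (Subgroup (Heisenberg K 1)),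
      (∀ N ∈ 𝒮, N ≤ Subgroup.center (Heisenberg K 1) ∧
        N.index = p ^ (2 * finrank (ZMod p) K + a)) ∧
      p ^ (a * b) ≤ 𝒮.card * (finrank (ZMod p) K * (p ^ finrank (ZMod p) K - 1)) ∧
      (∀ N ∈ 𝒮, ∀ N' ∈ 𝒮, N ≠ N' → ∀ [N.Normal] [N'.Normal],
        IsEmpty ((Heisenberg K 1 ⧸ N) ≃* (Heisenberg K 1 ⧸ N'))) := by
  classical
  set d := finrank (ZMod p) K
  have hK : Nat.card K = p ^ d := by
    rw [natCard_eq_pow_finrank (K := ZMod p), Nat.card_zmod]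
  obtain ⟨G, hGcard, hGrank⟩ := Submodule.exists_finset_finrank_eq (F := ZMod p) (V := K)
    (a := a) (b := b) (by omega)
  set Q := G.image (Quotient.mk (scaledAutSetoid p K))
  have hrank : ∀ q ∈ Q, finrank (ZMod p) q.out = b := by
    intro q hq
    obtain ⟨N, hN, rfl⟩ := Finset.mem_image.1 hq
    rw [finrank_eq_of_scaledAutSetoid (Quotient.mk_out N), hGrank N hN]
  have hidx : ∀ q ∈ Q, q.out.toAddSubgroup.index = p ^ a := by
    intro q hq
    rw [Submodule.index_toAddSubgroup_eq_pow, hrank q hq]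
    congr 1
    omega
  have hne_top : ∀ q ∈ Q, q.out.toAddSubgroup ≠ ⊤ := by
    intro q hq htop
    have h := hidx q hq
    rw [htop, AddSubgroup.index_top] at h
    exact (Nat.one_lt_pow ha.ne' (Fact.out : p.Prime).one_lt).ne h
  refine ⟨Q.image fun q => centralSubgroup q.out.toAddSubgroup, ?_, ?_, ?_⟩
  · intro N hN
    obtain ⟨q, hq, rfl⟩ := Finset.mem_image.1 hN
    refine ⟨centralSubgroup_le_center _, ?_⟩
    rw [index_centralSubgroup, hK, hidx q hq, ← pow_mul, ← pow_add, mul_comm]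
  · rw [Finset.card_image_of_injective _ fun q q' h =>
      Quotient.out_inj.1 (Submodule.toAddSubgroup_injective (centralSubgroup_injective h))]
    calc p ^ (a * b) = G.card := by rw [hGcard, ZMod.card]
      _ ≤ Q.card * (Nat.card (K ≃ₐ[ZMod p] K) * Nat.card Kˣ) :=
        card_le_card_image_scaledAutSetoid_mul G
      _ = Q.card * (d * (p ^ d - 1)) := by
        rw [IsGalois.card_aut_eq_finrank, Nat.card_units, hK]
  · intro N hN N' hN' hNN' _ _
    obtain ⟨q, hq, rfl⟩ := Finset.mem_image.1 hN
    obtain ⟨q', hq', rfl⟩ := Finset.mem_image.1 hN'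
    refine ⟨fun e => hNN' ?_⟩
    rw [Quotient.out_equiv_out.1 (scaledAutSetoid_rel_of_mulEquiv hdiv (hne_top q hq)
      (hne_top q' hq') (by rw [hrank q' hq']; omega) e)]

end Rigidity

end Heisenberg

lemma exists_degree {n : ℕ} (hn : 12 ≤ n) :
    ∃ d : ℕ, 0 < d ∧ 2 * d + 2 ≤ n ∧ n ≤ 3 * d ∧
      |12 * (d : ℤ) - 5 * (n : ℤ)| ≤ 60 ∧ ∀ m, m ∣ d → m < d → m < n - 2 * d := by
  -- A proper divisor of `d` is at most `d / 2`, and at most `d / 3` when `d` is odd.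
  suffices ∃ d : ℕ, 2 * d + 2 ≤ n ∧ n ≤ 3 * d ∧ 5 * n ≤ 12 * d + 60 ∧
      12 * d ≤ 5 * n + 60 ∧ ((Odd d ∧ 7 * d < 3 * n) ∨ 5 * d < 2 * n) by
    obtain ⟨d, h₁, h₂, h₃, h₄, h₅⟩ := this
    refine ⟨d, by omega, h₁, h₂, abs_le.2 ⟨by omega, by omega⟩, fun m hmd hlt => ?_⟩
    rcases h₅ with ⟨hodd, h₅⟩ | h₅
    · have := Nat.three_mul_le_of_dvd_of_lt hodd hmd hlt
      omega
    · have := Nat.two_mul_le_of_dvd_of_lt hmd hlt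
      omega
  by_cases hsmall : n ≤ 17
  · interval_cases n
    all_goals first | exact ⟨5, by decide⟩ | exact ⟨6, by decide⟩
  · set y := max ((n + 2) / 3) ((5 * n - 49) / 12)
    rcases Nat.even_or_odd y with ⟨k, hk⟩ | hy
    · refine ⟨y + 1, ?_, ?_, ?_, ?_, Or.inl ⟨⟨k, by omega⟩, ?_⟩⟩ <;> omega
    · refine ⟨y, ?_, ?_, ?_, ?_, Or.inl ⟨hy, ?_⟩⟩ <;> omega

theorem heisenberg_many_nonisomorphic_quotients_general
    (p n : ℕ) [Fact p.Prime] (hn : 12 ≤ n) :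
    ∃ d : ℕ, 0 < d ∧ 2 * d + 2 ≤ n ∧ n ≤ 3 * d ∧
      |12 * (d : ℤ) - 5 * (n : ℤ)| ≤ 60 ∧
      Nat.card (Heisenberg (GaloisField p d) 1) = p ^ (3 * d) ∧
      ∃ 𝒮 : Finset (Subgroup (Heisenberg (GaloisField p d) 1)),
        (∀ N ∈ 𝒮, N ≤ Subgroup.center (Heisenberg (GaloisField p d) 1) ∧
          N.index = p ^ n) ∧
        p ^ ((n - 2 * d) * (3 * d - n)) ≤ 𝒮.card * (d * (p ^ d - 1)) ∧
        (∀ N ∈ 𝒮, ∀ N' ∈ 𝒮, N ≠ N' →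
          ∀ [N.Normal] [N'.Normal],
            IsEmpty ((Heisenberg (GaloisField p d) 1 ⧸ N) ≃*
              (Heisenberg (GaloisField p d) 1 ⧸ N'))) := by
  obtain ⟨d, hd, h2d, h3d, habs, hdiv⟩ := exists_degree hn
  have hfin : finrank (ZMod p) (GaloisField p d) = d := GaloisField.finrank p hd.ne'
  obtain ⟨𝒮, h𝒮, hcard, hiso⟩ := Heisenberg.exists_finset_centralSubgroup_nonisomorphic
    (p := p) (K := GaloisField p d) (a := n - 2 * d) (b := 3 * d - n) (by omega) (by omega)
    (by rw [hfin]; exact hdiv)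
  rw [hfin] at h𝒮 hcard
  refine ⟨d, hd, h2d, h3d, habs, ?_, 𝒮, fun N hN => ?_, hcard, hiso⟩
  · rw [Heisenberg.natCard_eq, GaloisField.card p d hd.ne', ← pow_mul, mul_comm]
  · refine ⟨(h𝒮 N hN).1, (h𝒮 N hN).2.trans ?_⟩
    congr 1
    omega

/-- For every odd prime `p` and every `n ≥ 12` there is a `d > 0` with
`2d+2 ≤ n ≤ 3d` and `|12d - 5n| ≤ 60` such that the Heisenberg group
`H = H_1(𝔽_{p^d})` (of order `p^{3d}`) admits a family `𝒮` of subgroups of its center,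
each of index `p^n` in `H`, with `|𝒮| ≥ p^{(n-2d)(3d-n)}/(d(p^d-1))`, whose members give
pairwise nonisomorphic quotients `H/N` of order `p^n`. -/
theorem heisenberg_many_nonisomorphic_quotients
    (p n : ℕ) [Fact p.Prime] (hp : Odd p) (hn : 12 ≤ n) :
    ∃ d : ℕ, 0 < d ∧ 2 * d + 2 ≤ n ∧ n ≤ 3 * d ∧
      |12 * (d : ℤ) - 5 * (n : ℤ)| ≤ 60 ∧
      Nat.card (Heisenberg (GaloisField p d) 1) = p ^ (3 * d) ∧
      ∃ 𝒮 : Finset (Subgroup (Heisenberg (GaloisField p d) 1)),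
        (∀ N ∈ 𝒮, N ≤ Subgroup.center (Heisenberg (GaloisField p d) 1) ∧
          N.index = p ^ n) ∧
        p ^ ((n - 2 * d) * (3 * d - n)) ≤ 𝒮.card * (d * (p ^ d - 1)) ∧
        (∀ N ∈ 𝒮, ∀ N' ∈ 𝒮, N ≠ N' →
          ∀ [N.Normal] [N'.Normal],
            IsEmpty ((Heisenberg (GaloisField p d) 1 ⧸ N) ≃*
              (Heisenberg (GaloisField p d) 1 ⧸ N'))) :=
  heisenberg_many_nonisomorphic_quotients_general p n hn
end

section
/- For every integer n ≥ 12 there exists a positive integer d such that: (i) 2d + 2 ≤ n ≤ 3d; (ii) for every integer i with n − 2d ≤ i < d, i does not divide d; and (iii) |12d − 5n| ≤ 60. -/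
/-- A proper divisor is at most half. -/
lemma aux_two_mul_le {i d : ℕ} (hi : 0 < i) (hlt : i < d) (hdvd : i ∣ d) :
    2 * i ≤ d := by
  obtain ⟨k, rfl⟩ := hdvd
  have hk : 2 ≤ k := by nlinarith
  nlinarith

/-- A proper divisor of an odd number is at most a third. -/
lemma aux_three_mul_le {i d : ℕ} (hi : 0 < i) (hlt : i < d) (hdvd : i ∣ d)
    (hodd : d % 2 = 1) : 3 * i ≤ d := by
  obtain ⟨k, rfl⟩ := hdvd
  have hk : 2 ≤ k := by nlinarith
  rcases Nat.even_or_odd k with ⟨m, hm⟩ | hko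
  · exfalso
    have : i * k = 2 * (i * m) := by rw [hm]; ring
    omega
  · obtain ⟨m, hm⟩ := hko
    have hk3 : 3 ≤ k := by omega
    nlinarith

/-- For every integer `n ≥ 12` there is a positive integer `d` such that
(i) `2d + 2 ≤ n ≤ 3d`; (ii) no integer `i` with `n - 2d ≤ i < d` divides `d`; and
(iii) `|12d - 5n| ≤ 60`. -/
theorem exists_good_pair (n : ℕ) (hn : 12 ≤ n) :
    ∃ d : ℕ, 0 < d ∧ 2 * d + 2 ≤ n ∧ n ≤ 3 * d ∧
      (∀ i : ℕ, n - 2 * d ≤ i → i < d → ¬ i ∣ d) ∧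
      |12 * (d : ℤ) - 5 * (n : ℤ)| ≤ 60 := by
  by_cases hsmall : n ≤ 240
  · refine ⟨(2 * n - 1) / 5, by omega, by omega, by omega, ?_, ?_⟩
    · intro i h1 h2 hdvd
      have hi : 0 < i := by omega
      have := aux_two_mul_le hi h2 hdvd
      omega
    · rw [abs_le]
      constructor <;> push_cast <;> omega
  · set D := (5 * n + 12) / 12 with hD
    set d := if D % 2 = 1 then D else D - 1 with hd
    have hdo : d % 2 = 1 ∧ 5 * n - 23 ≤ 12 * d ∧ 12 * d ≤ 5 * n + 12 := by
      rw [hd]; split <;> omega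
    refine ⟨d, by omega, by omega, by omega, ?_, ?_⟩
    · intro i h1 h2 hdvd
      have hi : 0 < i := by omega
      have := aux_three_mul_le hi h2 hdvd hdo.1
      omega
    · rw [abs_le]
      constructor <;> push_cast <;> omega
end

section
/- Let K be a finite field, m ≥ 1, and H = H_m(K). A subgroup N of H is normal in H if and only if N ≤ [H,H] or [H,H] ≤ N. -/
set_option linter.unusedSectionVars false

/-!
In `H_m(K)` one computes `⁅g, n⁆ = (0, 0, g.x ⬝ᵥ n.y - n.x ⬝ᵥ g.y)`, so `[H,H]` is the central
line `{(0, 0, s)}` (a single commutator already reaches every `s` once `m ≥ 1`). Subgroups of the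
centre and subgroups containing `[H,H]` are normal. Conversely, if a normal `N` contains some `n`
with `(n.x, n.y) ≠ 0`, then `g ↦ ⁅g, n⁆` is onto the central line and its values lie in `N`.
-/

theorem Subgroup.normal_of_le_center {G : Type*} [Group G] {N : Subgroup G}
    (h : N ≤ Subgroup.center G) : N.Normal :=
  ⟨fun n hn g => by rwa [Subgroup.mem_center_iff.mp (h hn) g, mul_inv_cancel_right]⟩

open scoped commutatorElement

namespace Heisenberg

variable {K : Type*} [Field K] {m : ℕ}

def zAxis : Subgroup (Heisenberg K m) where
  carrier := {a | a.x = 0 ∧ a.y = 0}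
  mul_mem' := by rintro a b ⟨hax, hay⟩ ⟨hbx, hby⟩; simp [hax, hay, hbx, hby]
  one_mem' := ⟨rfl, rfl⟩
  inv_mem' := by rintro a ⟨hax, hay⟩; simp [hax, hay]

theorem mem_zAxis {a : Heisenberg K m} : a ∈ zAxis ↔ a.x = 0 ∧ a.y = 0 := Iff.rfl

theorem mk_zero_zero_mem_zAxis (s : K) : (⟨0, 0, s⟩ : Heisenberg K m) ∈ zAxis := ⟨rfl, rfl⟩

theorem eq_mk_zero_zero_of_mem_zAxis {a : Heisenberg K m} (ha : a ∈ zAxis) :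
    a = ⟨0, 0, a.z⟩ := by
  ext <;> simp [ha.1, ha.2]

theorem zAxis_le_center : zAxis ≤ Subgroup.center (Heisenberg K m) := by
  intro a ha
  refine Subgroup.mem_center_iff.mpr fun g => ?_
  ext <;> simp [ha.1, ha.2, add_comm]

theorem commutatorElement_eq (g h : Heisenberg K m) :
    ⁅g, h⁆ = ⟨0, 0, g.x ⬝ᵥ h.y - h.x ⬝ᵥ g.y⟩ := by
  ext <;> simp [commutatorElement_def, add_dotProduct, dotProduct_neg]
  ring

theorem commutator_le_zAxis : commutator (Heisenberg K m) ≤ zAxis := by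
  rw [commutator_def, Subgroup.commutator_le]
  intro g _ h _
  rw [commutatorElement_eq]
  exact mk_zero_zero_mem_zAxis _

theorem zAxis_le_commutator (hm : 1 ≤ m) : zAxis ≤ commutator (Heisenberg K m) := by
  intro a ha
  let i : Fin m := ⟨0, hm⟩
  have hcomm : ⁅(⟨Pi.single i 1, 0, 0⟩ : Heisenberg K m), ⟨0, Pi.single i a.z, 0⟩⁆ = a := by
    rw [eq_mk_zero_zero_of_mem_zAxis ha]
    simp [commutatorElement_eq]
  rw [← hcomm, commutator_def]
  exact Subgroup.commutator_mem_commutator (Subgroup.mem_top _) (Subgroup.mem_top _)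

theorem commutator_eq_zAxis (hm : 1 ≤ m) : commutator (Heisenberg K m) = zAxis :=
  le_antisymm commutator_le_zAxis (zAxis_le_commutator hm)

theorem exists_commutatorElement_eq {n : Heisenberg K m} (hn : n ∉ zAxis) (s : K) :
    ∃ g : Heisenberg K m, ⁅g, n⁆ = ⟨0, 0, s⟩ := by
  rcases not_and_or.mp (mem_zAxis.not.mp hn) with hx | hy
  · obtain ⟨j, hj⟩ := Function.ne_iff.mp hx
    refine ⟨⟨0, Pi.single j (-s / n.x j), 0⟩, ?_⟩
    simp [commutatorElement_eq, dotProduct_single, mul_div_cancel₀ _ hj]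
  · obtain ⟨j, hj⟩ := Function.ne_iff.mp hy
    refine ⟨⟨Pi.single j (s / n.y j), 0, 0⟩, ?_⟩
    simp [commutatorElement_eq, single_dotProduct, div_mul_cancel₀ s hj]

theorem zAxis_le_of_mem_of_notMem_zAxis {N : Subgroup (Heisenberg K m)} (hN : N.Normal)
    {n : Heisenberg K m} (hnN : n ∈ N) (hn : n ∉ zAxis) : zAxis ≤ N := by
  intro a ha
  obtain ⟨g, hg⟩ := exists_commutatorElement_eq hn a.z
  rw [eq_mk_zero_zero_of_mem_zAxis ha, ← hg]
  exact Subgroup.commutator_le_right ⊤ N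
    (Subgroup.commutator_mem_commutator (Subgroup.mem_top g) hnN)

end Heisenberg

theorem heisenberg_normal_iff_general
    (K : Type) [Field K] (m : ℕ) (hm : 1 ≤ m)
    (N : Subgroup (Heisenberg K m)) :
    N.Normal ↔ N ≤ commutator (Heisenberg K m) ∨ commutator (Heisenberg K m) ≤ N := by
  rw [Heisenberg.commutator_eq_zAxis hm]
  constructor
  · intro hN
    refine or_iff_not_imp_left.mpr fun hN_not_le => ?_
    obtain ⟨n, hnN, hn⟩ := SetLike.not_le_iff_exists.mp hN_not_le
    exact Heisenberg.zAxis_le_of_mem_of_notMem_zAxis hN hnN hn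
  · rintro (hle | hle)
    · exact Subgroup.normal_of_le_center (hle.trans Heisenberg.zAxis_le_center)
    · exact .of_commutator_le _ (Heisenberg.commutator_le_zAxis.trans hle)

/-- For a finite field `K`, `m ≥ 1`, and `H = H_m(K)`, a subgroup `N ≤ H`
is normal if and only if `N ≤ [H,H]` or `[H,H] ≤ N`. -/
theorem heisenberg_normal_iff
    (K : Type) [Field K] [Fintype K] (m : ℕ) (hm : 1 ≤ m)
    (N : Subgroup (Heisenberg K m)) :
    N.Normal ↔ N ≤ commutator (Heisenberg K m) ∨ commutator (Heisenberg K m) ≤ N :=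
  heisenberg_normal_iff_general K m hm N
end

section
/- Let K be a finite field, m ≥ 1, H = H_m(K), and let N be a proper subgroup of [H,H] (such N is automatically normal in H). Set G = H/N. Then: (i) [G,G] = Z(G) = [H,H]/N; (ii) for every g ∈ G with g ∉ [G,G], the subgroup generated by {[g,x] : x ∈ G} equals [G,G]; and (iii) for every noncentral g ∈ G, the centralizer C_G(g) has order |C_G(g)| = [G : [G,G]] = |K|^{2m}. -/
set_option linter.unusedSectionVars false

/-!
Commutators in `H_m(K)` are `⁅(u,v,s), (u',v',s')⁆ = (0, 0, u·v' - u'·v)`, so `[H,H] = Z(H)` is the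
`s`-axis, and for `(u,v) ≠ 0` the map `x ↦ ⁅(u,v,s), x⁆` is onto it. This covering property passes to
every quotient `G = H/N`. Since `N < [H,H]`, `[G,G]` is nontrivial and central, so a `g ∉ [G,G]` has a
nontrivial commutator and is not central. Finally `x ↦ ⁅x, g⁆` induces a bijection
`G / C_G(g) ≃ [G,G]`, whence `|C_G(g)| = |G| / |[G,G]| = [G : [G,G]]`.
-/

open scoped commutatorElement

open Subgroup

/-- Every `g ∉ [G,G]` is conjugate to all of `g[G,G]`; together with `[G,G] ≠ 1` this is the
definition of a Camina group. -/
def CommutatorsCover (G : Type*) [Group G] : Prop :=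
  ∀ g ∉ commutator G, ∀ c ∈ commutator G, ∃ x, ⁅g, x⁆ = c

section Surjective

variable {H G : Type*} [Group H] [Group G] {f : H →* G}

lemma map_commutator_of_surjective (hf : Function.Surjective f) :
    (commutator H).map f = commutator G := by
  rw [map_commutator_eq, MonoidHom.range_eq_top_of_surjective f hf, commutator_def]

lemma commutator_le_center_of_surjective (hf : Function.Surjective f)
    (hH : commutator H ≤ center H) : commutator G ≤ center G := by
  rw [← map_commutator_of_surjective hf]
  rintro _ ⟨c, hc, rfl⟩
  refine mem_center_iff.mpr fun a => ?_
  obtain ⟨a, rfl⟩ := hf a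
  rw [← map_mul, ← map_mul, mem_center_iff.mp (hH hc) a]

lemma CommutatorsCover.of_surjective (hf : Function.Surjective f) (hH : CommutatorsCover H) :
    CommutatorsCover G := by
  intro g hg c hc
  obtain ⟨h, rfl⟩ := hf g
  rw [← map_commutator_of_surjective hf] at hg hc
  obtain ⟨c, hc, rfl⟩ := hc
  obtain ⟨x, rfl⟩ := hH h (fun hh => hg ⟨h, hh, rfl⟩) c hc
  exact ⟨f x, (map_commutatorElement f h x).symm⟩

end Surjective

namespace CommutatorsCover

variable {G : Type*} [Group G] (hG : CommutatorsCover G) {g : G}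
include hG

lemma closure_commutatorElement_eq (hg : g ∉ commutator G) :
    Subgroup.closure {c | ∃ x, c = ⁅g, x⁆} = commutator G := by
  refine le_antisymm ?_ fun c hc => ?_
  · rw [closure_le]
    rintro _ ⟨x, rfl⟩
    exact commutator_mem_commutator (mem_top g) (mem_top x)
  · obtain ⟨x, rfl⟩ := hG g hg c hc
    exact subset_closure ⟨x, rfl⟩

lemma center_le_commutator (hne : commutator G ≠ ⊥) : center G ≤ commutator G := by
  intro g hcen
  by_contra hg
  refine hne (eq_bot_iff.mpr fun c hc => ?_)
  obtain ⟨x, rfl⟩ := hG g hg c hc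
  rw [mem_bot, commutatorElement_eq_one_iff_commute]
  exact (mem_center_iff.mp hcen x).symm

lemma index_centralizer (hg : g ∉ commutator G) :
    (centralizer {g}).index = Nat.card (commutator G) := by
  let e := quotientCentralizerEmbedding g
  have he : ∀ q, (e q : G) ∈ commutator G := fun q => by
    rw [commutator_eq_closure]
    exact subset_closure (e q).2
  refine Nat.card_eq_of_bijective (fun q => ⟨e q, he q⟩) ⟨fun q q' h => ?_, fun c => ?_⟩
  · exact e.injective (Subtype.ext (Subtype.mk.inj h))
  · obtain ⟨x, hx⟩ := hG g hg c⁻¹ (inv_mem c.2)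
    refine ⟨x, Subtype.ext ?_⟩
    change ⁅x, g⁆ = c
    rw [← commutatorElement_inv, hx, inv_inv]

lemma card_centralizer [Finite G] (hg : g ∉ commutator G) :
    Nat.card (centralizer {g}) = (commutator G).index := by
  have h := (card_mul_index (centralizer {g})).trans (card_mul_index (commutator G)).symm
  rw [hG.index_centralizer hg, mul_comm] at h
  exact Nat.eq_of_mul_eq_mul_left Nat.card_pos h

end CommutatorsCover

namespace Heisenberg

variable {K : Type*} [Field K] {m : ℕ}

lemma commutatorElement_eq_s6 (a b : Heisenberg K m) :
    ⁅a, b⁆ = ⟨0, 0, a.x ⬝ᵥ b.y - b.x ⬝ᵥ a.y⟩ := by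
  change a * b * a⁻¹ * b⁻¹ = _
  ext <;> simp [add_dotProduct, dotProduct_neg]; ring

variable (K m) in
def projXY : Heisenberg K m →* Multiplicative ((Fin m → K) × (Fin m → K)) where
  toFun a := Multiplicative.ofAdd (a.x, a.y)
  map_one' := rfl
  map_mul' _ _ := rfl

lemma mem_ker_projXY {a : Heisenberg K m} : a ∈ (projXY K m).ker ↔ a.x = 0 ∧ a.y = 0 := by
  simp [projXY, MonoidHom.mem_ker]

lemma projXY_surjective : Function.Surjective (projXY K m) :=
  fun p => ⟨⟨p.toAdd.1, p.toAdd.2, 0⟩, rfl⟩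

lemma ker_projXY_le_center : (projXY K m).ker ≤ center (Heisenberg K m) := by
  intro c hc
  obtain ⟨hx, hy⟩ := mem_ker_projXY.mp hc
  refine mem_center_iff.mpr fun a => ?_
  ext <;> simp [hx, hy, add_comm]

lemma exists_commutatorElement_eq_s6 {a : Heisenberg K m} (ha : a ∉ (projXY K m).ker) (t : K) :
    ∃ b : Heisenberg K m, ⁅a, b⁆ = ⟨0, 0, t⟩ := by
  simp_rw [commutatorElement_eq_s6]
  rw [mem_ker_projXY, not_and_or] at ha
  rcases ha with hx | hy
  · obtain ⟨i, hi⟩ := Function.ne_iff.mp hx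
    refine ⟨⟨0, Pi.single i ((a.x i)⁻¹ * t), 0⟩, ?_⟩
    ext <;> simp [dotProduct_single]
    field_simp [show a.x i ≠ 0 from hi]
  · obtain ⟨i, hi⟩ := Function.ne_iff.mp hy
    refine ⟨⟨Pi.single i (-(a.y i)⁻¹ * t), 0, 0⟩, ?_⟩
    ext <;> simp [single_dotProduct]
    field_simp [show a.y i ≠ 0 from hi]

lemma commutator_eq_ker_projXY (hm : m ≠ 0) : commutator (Heisenberg K m) = (projXY K m).ker := by
  refine le_antisymm (Abelianization.commutator_subset_ker _) fun c hc => ?_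
  obtain ⟨hx, hy⟩ := mem_ker_projXY.mp hc
  let i : Fin m := ⟨0, Nat.pos_of_ne_zero hm⟩
  have ha : (⟨Pi.single i 1, 0, 0⟩ : Heisenberg K m) ∉ (projXY K m).ker := by
    rw [mem_ker_projXY, not_and_or]
    exact Or.inl fun h => by simpa [i] using congrFun h i
  obtain ⟨b, hb⟩ := exists_commutatorElement_eq_s6 ha c.z
  have hc : c = ⟨0, 0, c.z⟩ := by ext <;> simp [hx, hy]
  rw [hc, ← hb]
  exact commutator_mem_commutator (mem_top _) (mem_top b)

lemma commutatorsCover (hm : m ≠ 0) : CommutatorsCover (Heisenberg K m) := by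
  rw [CommutatorsCover, commutator_eq_ker_projXY hm]
  intro a ha c hc
  obtain ⟨hx, hy⟩ := mem_ker_projXY.mp hc
  obtain ⟨b, hb⟩ := exists_commutatorElement_eq_s6 ha c.z
  exact ⟨b, hb.trans (by ext <;> simp [hx, hy])⟩

instance [Finite K] : Finite (Heisenberg K m) :=
  Finite.of_injective (fun a => (a.x, a.y, a.z)) fun a b h => by
    simp only [Prod.mk.injEq] at h
    ext1 <;> tauto

lemma index_ker_projXY [Fintype K] : (projXY K m).ker.index = Fintype.card K ^ (2 * m) := by
  rw [index_ker, MonoidHom.range_eq_top_of_surjective _ projXY_surjective, card_top,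
    Nat.card_congr Multiplicative.toAdd, Nat.card_eq_fintype_card]
  simp [Fintype.card_prod, two_mul, pow_add]

end Heisenberg

/-- Let `K` be a finite field, `m ≥ 1`, `H = H_m(K)`, and let `N` be a proper
subgroup of `[H,H]` (automatically normal).  Set `G = H/N`.  Then `[G,G] = Z(G) = [H,H]/N`;
for every `g ∈ G \ [G,G]` the subgroup generated by the commutators `[g,x]` is `[G,G]`; and
every noncentral `g ∈ G` has centralizer of order `[G : [G,G]] = |K|^{2m}`. -/
theorem heisenberg_quotient_camina
    (K : Type) [Field K] [Fintype K] (m : ℕ) (hm : 1 ≤ m)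
    (N : Subgroup (Heisenberg K m)) (hN : N < commutator (Heisenberg K m))
    [N.Normal] :
    commutator (Heisenberg K m ⧸ N) = Subgroup.center (Heisenberg K m ⧸ N) ∧
    commutator (Heisenberg K m ⧸ N) =
      Subgroup.map (QuotientGroup.mk' N) (commutator (Heisenberg K m)) ∧
    (∀ g : Heisenberg K m ⧸ N, g ∉ commutator (Heisenberg K m ⧸ N) →
      Subgroup.closure {c : Heisenberg K m ⧸ N | ∃ x : Heisenberg K m ⧸ N, c = ⁅g, x⁆} =
        commutator (Heisenberg K m ⧸ N)) ∧
    (∀ g : Heisenberg K m ⧸ N, g ∉ Subgroup.center (Heisenberg K m ⧸ N) →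
      Nat.card (Subgroup.centralizer {g} : Subgroup (Heisenberg K m ⧸ N)) =
          (commutator (Heisenberg K m ⧸ N)).index ∧
        (commutator (Heisenberg K m ⧸ N)).index = Fintype.card K ^ (2 * m)) := by
  set H := Heisenberg K m
  have hmk := QuotientGroup.mk'_surjective N
  have hm₀ : m ≠ 0 := Nat.one_le_iff_ne_zero.mp hm
  have hH := Heisenberg.commutator_eq_ker_projXY (K := K) hm₀
  have hmap := map_commutator_of_surjective hmk
  have hcover := (Heisenberg.commutatorsCover (K := K) hm₀).of_surjective hmk
  have hne : commutator (H ⧸ N) ≠ ⊥ := by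
    rw [← hmap, Ne, Subgroup.map_eq_bot_iff, QuotientGroup.ker_mk']
    exact hN.not_ge
  have hcenter : commutator (H ⧸ N) = center (H ⧸ N) :=
    le_antisymm (commutator_le_center_of_surjective hmk (hH ▸ Heisenberg.ker_projXY_le_center))
      (hcover.center_le_commutator hne)
  refine ⟨hcenter, hmap.symm, fun g hg => hcover.closure_commutatorElement_eq hg,
    fun g hg => ⟨hcover.card_centralizer (hcenter ▸ hg), ?_⟩⟩
  rw [← hmap, index_map_eq _ hmk (by rw [QuotientGroup.ker_mk']; exact hN.le), hH,
    Heisenberg.index_ker_projXY]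
end

section
/- Let p be an odd prime and G a finite group such that g^p = 1 for all g ∈ G and [G,G] = Z(G) with 1 < Z(G) < G. Let Bi(G) : G/Z(G) × G/Z(G) → [G,G] be the commutator bimap, an alternating 𝔽_p-bilinear map of 𝔽_p-vector spaces (G/Z(G) and [G,G] are elementary abelian p-groups). Then G is isomorphic to the Baer group Grp(Bi(G)). -/
/-!
Commutators are central of order dividing `p`, so `⁅b, a⁆ ^ ((p + 1) / 2)` is a square root of
`⁅b, a⁆`, and Baer's sum `a + b = a * b * ⁅b, a⁆ ^ ((p + 1) / 2)` turns `G` into an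
`𝔽_p`-vector space for which `g ↦ g Z(G)` is linear. A linear section `s` of this map satisfies
`s u * s v = s (u + v) * ⁅s u, s v⁆ ^ (1/2)`, which is exactly the multiplication rule of
`Grp(Bi(G))`, so `(u, w) ↦ s u * w` is an isomorphism `Grp(Bi(G)) ≃* G`.
-/

set_option linter.unusedSectionVars false

section Baer

variable {p : ℕ} [Fact p.Prime] {V W : Type*}
  [AddCommGroup V] [AddCommGroup W] [Module (ZMod p) V] [Module (ZMod p) W]

/-- The Baer group `Grp(b)` of an alternating `𝔽_p`-bilinear map `b : V × V → W` (for `p` odd):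
the set `V × W` endowed with the product `(u,s)·(v,t) = (u+v, s+t+2⁻¹·b(u,v))`. -/
def BaerGroup (b : V →ₗ[ZMod p] V →ₗ[ZMod p] W) : Type _ := V × W

namespace BaerGroup

variable (b : V →ₗ[ZMod p] V →ₗ[ZMod p] W)

instance : Mul (BaerGroup b) :=
  ⟨fun x y => ((x.1 + y.1 : V), (x.2 + y.2 + (2⁻¹ : ZMod p) • (b x.1 y.1) : W))⟩

instance : One (BaerGroup b) := ⟨((0 : V), (0 : W))⟩

instance : Inv (BaerGroup b) :=
  ⟨fun x => ((-x.1 : V), (-x.2 + (2⁻¹ : ZMod p) • (b x.1 x.1) : W))⟩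

variable {b}

@[simp] lemma mul_fst (x y : BaerGroup b) : (x * y).1 = x.1 + y.1 := rfl
@[simp] lemma mul_snd (x y : BaerGroup b) :
    (x * y).2 = x.2 + y.2 + (2⁻¹ : ZMod p) • (b x.1 y.1) := rfl
@[simp] lemma one_fst : (1 : BaerGroup b).1 = 0 := rfl
@[simp] lemma one_snd : (1 : BaerGroup b).2 = 0 := rfl
@[simp] lemma inv_fst (x : BaerGroup b) : (x⁻¹).1 = -x.1 := rfl
@[simp] lemma inv_snd (x : BaerGroup b) :
    (x⁻¹).2 = -x.2 + (2⁻¹ : ZMod p) • (b x.1 x.1) := rfl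

lemma prodext {x y : BaerGroup b} (h1 : x.1 = y.1) (h2 : x.2 = y.2) : x = y :=
  Prod.ext h1 h2

instance instGroup : Group (BaerGroup b) where
  mul_assoc x y z := by
    refine prodext ?_ ?_
    · simp [add_assoc]
    · simp [map_add, LinearMap.add_apply, smul_add]
      abel
  one_mul x := by
    refine prodext ?_ ?_ <;> simp
  mul_one x := by
    refine prodext ?_ ?_ <;> simp
  inv_mul_cancel x := by
    refine prodext ?_ ?_
    · simp
    · simp [map_neg, LinearMap.neg_apply]

end BaerGroup

end Baer

open scoped commutatorElement

section ClassTwo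

variable {G : Type*} [Group G]

lemma commutatorElement_mem_center (hC : commutator G ≤ Subgroup.center G) (a b : G) :
    ⁅a, b⁆ ∈ Subgroup.center G :=
  hC (Subgroup.commutator_mem_commutator (Subgroup.mem_top a) (Subgroup.mem_top b))

lemma commutatorElement_mul_left_of_le_center (hC : commutator G ≤ Subgroup.center G)
    (a b c : G) : ⁅a * b, c⁆ = ⁅a, c⁆ * ⁅b, c⁆ := by
  have hbc := Subgroup.mem_center_iff.mp (commutatorElement_mem_center hC b c)
  rw [commutatorElement_mul_left_eq_conj_mul, hbc a, mul_inv_cancel_right, hbc]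

lemma commutatorElement_mul_right_of_le_center (hC : commutator G ≤ Subgroup.center G)
    (a b c : G) : ⁅a, b * c⁆ = ⁅a, b⁆ * ⁅a, c⁆ := by
  have hac := Subgroup.mem_center_iff.mp (commutatorElement_mem_center hC a c)
  rw [commutatorElement_mul_right_eq_mul_conj, mul_assoc _ b, hac b, ← mul_assoc,
    mul_inv_cancel_right]

def baerSum (m : ℕ) (a b : G) : G := a * b * ⁅b, a⁆ ^ m

lemma baerSum_assoc (hC : commutator G ≤ Subgroup.center G) (m : ℕ) (a b c : G) :
    baerSum m (baerSum m a b) c = baerSum m a (baerSum m b c) := by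
  have hZ (x y : G) : ⁅x, y⁆ ∈ Subgroup.center G := commutatorElement_mem_center hC x y
  have hswap (x y z : G) (hz : z ∈ Subgroup.center G) : x * z * y = x * y * z := by
    rw [mul_assoc, ← Subgroup.mem_center_iff.mp hz y, mul_assoc]
  have hc : ⁅c, ⁅b, a⁆ ^ m⁆ = 1 :=
    commutatorElement_eq_one_iff_commute.mpr (Subgroup.mem_center_iff.mp (pow_mem (hZ b a) m) c)
  have ha : ⁅⁅c, b⁆ ^ m, a⁆ = 1 :=
    commutatorElement_eq_one_iff_commute.mpr
      (Subgroup.mem_center_iff.mp (pow_mem (hZ c b) m) a).symm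
  simp only [baerSum, commutatorElement_mul_right_of_le_center hC,
    commutatorElement_mul_left_of_le_center hC, hc, ha, mul_one]
  lift ⁅b, a⁆ to Subgroup.center G using hZ b a with X
  lift ⁅c, a⁆ to Subgroup.center G using hZ c a with Y
  lift ⁅c, b⁆ to Subgroup.center G using hZ c b with Z
  simp only [← Subgroup.coe_mul, ← Subgroup.coe_pow, ← mul_assoc, hswap _ c _ (X ^ m).2]
  rw [mul_assoc, mul_assoc (a * b * c), ← Subgroup.coe_mul, ← Subgroup.coe_mul,
    Commute.mul_pow (mul_comm' Y Z), Commute.mul_pow (mul_comm' X Y), ← mul_assoc,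
    mul_comm' (X ^ m * Y ^ m)]

lemma baerSum_comm (hC : commutator G ≤ Subgroup.center G) {m : ℕ}
    (hm : ∀ a b : G, ⁅a, b⁆ ^ (2 * m) = ⁅a, b⁆) (a b : G) : baerSum m a b = baerSum m b a := by
  have hba : b * a = a * b * ⁅b, a⁆ := by
    rw [Subgroup.mem_center_iff.mp (commutatorElement_mem_center hC b a), commutatorElement_def]
    group
  rw [baerSum, baerSum, hba, ← commutatorElement_inv b a, inv_pow, mul_assoc (a * b)]
  congr 1
  rw [eq_mul_inv_iff_mul_eq, ← pow_add, ← two_mul, hm]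

lemma baerSum_self_pow (m n : ℕ) (a : G) : baerSum m (a ^ n) a = a ^ (n + 1) := by
  rw [baerSum, commutatorElement_eq_one_iff_commute.mpr ((Commute.refl a).pow_right n), one_pow,
    mul_one, pow_succ]

abbrev baerAddCommGroup (hC : commutator G ≤ Subgroup.center G) (m : ℕ)
    (hm : ∀ a b : G, ⁅a, b⁆ ^ (2 * m) = ⁅a, b⁆) : AddCommGroup G where
  add := baerSum m
  zero := 1
  neg a := a⁻¹
  nsmul n a := a ^ n
  zsmul n a := a ^ n
  add_assoc := baerSum_assoc hC m
  add_comm := baerSum_comm hC hm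
  zero_add a := by
    show baerSum m 1 a = a
    simp [baerSum]
  add_zero a := by
    show baerSum m a 1 = a
    simp [baerSum]
  neg_add_cancel a := by
    show baerSum m a⁻¹ a = 1
    simp [baerSum, commutatorElement_def]
  nsmul_zero := pow_zero
  nsmul_succ n a := (baerSum_self_pow m n a).symm
  zsmul_zero' := zpow_zero
  zsmul_succ' n a := by
    show a ^ ((n + 1 : ℕ) : ℤ) = baerSum m (a ^ (n : ℤ)) a
    rw [zpow_natCast, zpow_natCast, baerSum_self_pow]
  zsmul_neg' n a := by
    show a ^ Int.negSucc n = (a ^ ((n + 1 : ℕ) : ℤ))⁻¹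
    rw [zpow_negSucc, zpow_natCast]

end ClassTwo

theorem exists_section_mul_eq_mul_commutatorElement_pow {p : ℕ} [Fact p.Prime] {G : Type*}
    [Group G] (hexp : ∀ g : G, g ^ p = 1) (hC : commutator G ≤ Subgroup.center G) {m : ℕ}
    (hm : 2 * m = p + 1) {V : Type*} [AddCommGroup V] [Module (ZMod p) V]
    (q : G →* Multiplicative V) (hq : Function.Surjective q) :
    ∃ s : V → G, (∀ v, q (s v) = Multiplicative.ofAdd v) ∧
      ∀ u v, s u * s v = s (u + v) * ⁅s u, s v⁆ ^ m := by
  let := baerAddCommGroup hC m fun a b => by rw [hm, pow_succ, hexp, one_mul]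
  let : Module (ZMod p) G := AddCommGroup.zmodModule (n := p) hexp
  have hq_commutator (a b : G) : q ⁅a, b⁆ = 1 := by
    rw [map_commutatorElement, commutatorElement_eq_one_iff_mul_comm, mul_comm]
  let π : G →+ V := AddMonoidHom.mk' (fun g => (q g).toAdd) fun a b => by
    show (q (baerSum m a b)).toAdd = (q a).toAdd + (q b).toAdd
    rw [baerSum, map_mul, map_pow, hq_commutator, one_pow, mul_one, map_mul, toAdd_mul]
  have hπ : LinearMap.range (π.toZModLinearMap p) = ⊤ := by
    refine LinearMap.range_eq_top.mpr fun v => ?_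
    obtain ⟨g, hg⟩ := hq (.ofAdd v)
    exact ⟨g, congrArg Multiplicative.toAdd hg⟩
  obtain ⟨s, hs⟩ := (π.toZModLinearMap p).exists_rightInverse_of_surjective hπ
  refine ⟨s, fun v => congrArg Multiplicative.ofAdd (LinearMap.congr_fun hs v), fun u v => ?_⟩
  have hs_add : s (u + v) = baerSum m (s u) (s v) := map_add s u v
  rw [hs_add, baerSum, ← commutatorElement_inv (s u) (s v), inv_pow, inv_mul_cancel_right]

lemma inv_two_smul_eq_nsmul {p : ℕ} [Fact p.Prime] {m : ℕ} (hm : 2 * m = p + 1) {W : Type*}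
    [AddCommGroup W] [Module (ZMod p) W] (w : W) : (2⁻¹ : ZMod p) • w = m • w := by
  have h2m : (2 : ZMod p) * m = 1 := by
    exact_mod_cast (congrArg (Nat.cast : ℕ → ZMod p) hm).trans (by simp)
  rw [inv_eq_of_mul_eq_one_right h2m, Nat.cast_smul_eq_nsmul]

namespace BaerGroup

variable {p : ℕ} [Fact p.Prime] {V W G : Type*} [AddCommGroup V] [AddCommGroup W]
  [Module (ZMod p) V] [Module (ZMod p) W] [Group G] {b : V →ₗ[ZMod p] V →ₗ[ZMod p] W}

def homOfSection (ι : Multiplicative W →* G) (hι : ι.range ≤ Subgroup.center G) (s : V → G)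
    (hs : ∀ u v, s u * s v = s (u + v) * ι (.ofAdd ((2⁻¹ : ZMod p) • b u v))) :
    BaerGroup b →* G :=
  MonoidHom.mk' (fun x => s x.1 * ι (.ofAdd x.2)) fun x y => by
    have hcomm : Commute (ι (.ofAdd x.2)) (s y.1) :=
      (Subgroup.mem_center_iff.mp (hι ⟨_, rfl⟩) (s y.1)).symm
    calc s (x.1 + y.1) * ι (.ofAdd (x.2 + y.2 + (2⁻¹ : ZMod p) • b x.1 y.1))
        = s (x.1 + y.1) * ι (.ofAdd ((2⁻¹ : ZMod p) • b x.1 y.1))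
            * (ι (.ofAdd x.2) * ι (.ofAdd y.2)) := by
          rw [mul_assoc, ← map_mul, ← map_mul, ← ofAdd_add, ← ofAdd_add, add_comm _ (x.2 + y.2)]
      _ = s x.1 * ι (.ofAdd x.2) * (s y.1 * ι (.ofAdd y.2)) := by
          rw [← hs]
          simp only [mul_assoc, hcomm.left_comm]

lemma homOfSection_apply (ι : Multiplicative W →* G) (hι : ι.range ≤ Subgroup.center G)
    (s : V → G) (hs : ∀ u v, s u * s v = s (u + v) * ι (.ofAdd ((2⁻¹ : ZMod p) • b u v)))
    (x : BaerGroup b) : homOfSection ι hι s hs x = s x.1 * ι (.ofAdd x.2) :=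
  rfl

theorem bijective_homOfSection (ι : Multiplicative W →* G) (hι_inj : Function.Injective ι)
    (hι : ι.range ≤ Subgroup.center G) (q : G →* Multiplicative V) (hexact : ι.range = q.ker)
    (s : V → G) (hsq : ∀ v, q (s v) = .ofAdd v)
    (hs : ∀ u v, s u * s v = s (u + v) * ι (.ofAdd ((2⁻¹ : ZMod p) • b u v))) :
    Function.Bijective (homOfSection ι hι s hs) := by
  have hq (x : BaerGroup b) : q (homOfSection ι hι s hs x) = .ofAdd x.1 := by
    have hι_ker : ι (.ofAdd x.2) ∈ q.ker := hexact ▸ ⟨_, rfl⟩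
    rw [homOfSection_apply, map_mul, hsq, hι_ker, mul_one]
  refine ⟨fun x y hxy => ?_, fun g => ?_⟩
  · have h1 : x.1 = y.1 := by simpa [hq] using congrArg q hxy
    rw [homOfSection_apply, homOfSection_apply, h1, mul_right_inj] at hxy
    exact prodext h1 (by simpa using hι_inj hxy)
  · set u := (q g).toAdd
    have hker : (s u)⁻¹ * g ∈ q.ker := by
      rw [MonoidHom.mem_ker, map_mul, map_inv, hsq, ofAdd_toAdd, inv_mul_cancel]
    obtain ⟨w, hw⟩ := hexact ▸ hker
    refine ⟨show BaerGroup b from (u, w.toAdd), ?_⟩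
    rw [homOfSection_apply, ofAdd_toAdd, hw, mul_inv_cancel_left]

end BaerGroup

/-- Let `p` be an odd prime and `G` a finite group with `g^p = 1` for all
`g`, `[G,G] = Z(G)`, and `1 < Z(G) < G`.  If `b : V × V → W` is (a realization over `𝔽_p` of)
the commutator bimap `Bi(G)` of `G` — i.e. there are bijections `eV : G/Z(G) ≃ V` and
`eW : Z(G) = [G,G] ≃ W` transporting multiplication to addition and carrying the commutator
map to `b` — then `G` is isomorphic to the Baer group `Grp(b)`. -/
theorem baer_correspondence
    (p : ℕ) [Fact p.Prime] (hp : Odd p) (G : Type) [Group G]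
    (hexp : ∀ g : G, g ^ p = 1)
    (hcz : commutator G = Subgroup.center G)
    (V W : Type) [AddCommGroup V] [AddCommGroup W]
    [Module (ZMod p) V] [Module (ZMod p) W]
    (b : V →ₗ[ZMod p] V →ₗ[ZMod p] W)
    (eV : (G ⧸ Subgroup.center G) ≃ V)
    (heV : ∀ x y : G ⧸ Subgroup.center G, eV (x * y) = eV x + eV y)
    (eW : ↥(Subgroup.center G) ≃ W)
    (heW : ∀ x y : ↥(Subgroup.center G), eW (x * y) = eW x + eW y)
    (hcomm : ∀ g h : G,
      b (eV ↑g) (eV ↑h) =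
        eW ⟨⁅g, h⁆, by
          rw [← hcz, commutator_def]
          exact Subgroup.commutator_mem_commutator (Subgroup.mem_top g)
            (Subgroup.mem_top h)⟩) :
    Nonempty (G ≃* BaerGroup b) := by
  obtain ⟨k, rfl⟩ := hp
  have hm : 2 * (k + 1) = 2 * k + 1 + 1 := by ring
  let eV' : G ⧸ Subgroup.center G ≃* Multiplicative V :=
    MulEquiv.mk' (eV.trans Multiplicative.ofAdd) heV
  let eW' : Subgroup.center G ≃* Multiplicative W :=
    MulEquiv.mk' (eW.trans Multiplicative.ofAdd) heW
  let q : G →* Multiplicative V := eV'.toMonoidHom.comp (QuotientGroup.mk' _)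
  let ι : Multiplicative W →* G := (Subgroup.center G).subtype.comp eW'.symm.toMonoidHom
  have hq_ker : q.ker = Subgroup.center G := by
    rw [MonoidHom.ker_comp_of_injective _ _ eV'.injective, QuotientGroup.ker_mk']
  have hι_range : ι.range = Subgroup.center G := by
    ext g
    refine ⟨fun ⟨w, hw⟩ => hw ▸ (eW'.symm w).2, fun hg => ⟨eW' ⟨g, hg⟩, ?_⟩⟩
    simp [ι]
  obtain ⟨s, hsq, hs⟩ := exists_section_mul_eq_mul_commutatorElement_pow hexp hcz.le hm q
    (eV'.surjective.comp (QuotientGroup.mk'_surjective _))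
  have hι_commutator (u v : V) : ι (.ofAdd (b u v)) = ⁅s u, s v⁆ := by
    have h := hcomm (s u) (s v)
    rw [show eV (s u) = u from congrArg Multiplicative.toAdd (hsq u),
      show eV (s v) = v from congrArg Multiplicative.toAdd (hsq v)] at h
    rw [h]
    exact congrArg Subtype.val (eW'.symm_apply_apply _)
  have hs_half (u v : V) :
      s u * s v = s (u + v) * ι (.ofAdd ((2⁻¹ : ZMod (2 * k + 1)) • b u v)) := by
    rw [inv_two_smul_eq_nsmul hm, ofAdd_nsmul, map_pow, hι_commutator, hs]
  have hι_inj : Function.Injective ι := Subtype.val_injective.comp eW'.symm.injective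
  exact ⟨(MulEquiv.ofBijective _ (BaerGroup.bijective_homOfSection ι hι_inj hι_range.le q
    (hι_range.trans hq_ker.symm) s hsq hs_half)).symm⟩
end

section
/- Let V and W be finite abelian groups and b : V × V → W a biadditive map that is nondegenerate (b(u,V) = 0 implies u = 0, and b(V,v) = 0 implies v = 0) and satisfies that b(V,V) generates W. Define Cent(b) = {(f,h) ∈ End(V) × End(W) : b(f(u),v) = h(b(u,v)) = b(u,f(v)) for all u,v ∈ V}. Then Cent(b) is a commutative subring of End(V) × End(W), and both coordinate projections (f,h) ↦ f and (f,h) ↦ h are injective on Cent(b). -/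
/-!
For `(f, h)` in the centroid, `h (b u v) = b (f u) v`, so `f` determines `h` on the values
of `b`, hence everywhere when these values generate `W`; and `h` determines `f` when `b` is
left nondegenerate. The second components of two centroid elements `x, y` commute on every
value `b u v`, by moving `x.1` and `y.1` across `b` in opposite directions; since `x * y` and
`y * x` lie in the centroid, injectivity of the second projection makes the centroid commutative.
-/

/-- The centroid of a biadditive map `b : V × V → W`: all pairs `(f,h)` of additive
endomorphisms with `b(f u, v) = h (b u v) = b(u, f v)` for all `u, v`. -/
def centroidSet {V W : Type*} [AddCommGroup V] [AddCommGroup W]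
    (b : V →+ V →+ W) : Set (AddMonoid.End V × AddMonoid.End W) :=
  {x | ∀ u v : V, b (x.1 u) v = x.2 (b u v) ∧ x.2 (b u v) = b u (x.1 v)}

theorem AddMonoidHom.ext_of_closure_range_eq_top {V W M : Type*} [AddCommGroup V]
    [AddCommGroup W] [AddMonoid M] {b : V →+ V →+ W}
    (hgen : AddSubgroup.closure {w : W | ∃ u v : V, w = b u v} = ⊤)
    {h k : W →+ M} (hhk : ∀ u v, h (b u v) = k (b u v)) : h = k :=
  AddMonoidHom.eq_of_eqOn_dense hgen fun _ ⟨u, v, hw⟩ => hw ▸ hhk u v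

theorem AddMonoidHom.injective_of_left_nondegenerate {V W : Type*} [AddCommGroup V]
    [AddCommGroup W] {b : V →+ V →+ W} (hndl : ∀ u : V, (∀ v : V, b u v = 0) → u = 0) :
    Function.Injective b :=
  (injective_iff_map_eq_zero b).2 fun u hu => hndl u fun v => by simp [hu]

namespace centroidSet

variable {V W : Type*} [AddCommGroup V] [AddCommGroup W] {b : V →+ V →+ W}

variable (b) in
def subring : Subring (AddMonoid.End V × AddMonoid.End W) where
  carrier := centroidSet b
  zero_mem' _ _ := by simp
  one_mem' _ _ := by simp
  add_mem' {x y} hx hy u v := by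
    refine ⟨?_, ?_⟩
    · change b (x.1 u + y.1 u) v = x.2 (b u v) + y.2 (b u v)
      rw [map_add, AddMonoidHom.add_apply, (hx u v).1, (hy u v).1]
    · change x.2 (b u v) + y.2 (b u v) = b u (x.1 v + y.1 v)
      rw [map_add, (hx u v).2, (hy u v).2]
  neg_mem' {x} hx u v := by
    refine ⟨?_, ?_⟩
    · change b (-x.1 u) v = -x.2 (b u v)
      rw [map_neg, AddMonoidHom.neg_apply, (hx u v).1]
    · change -x.2 (b u v) = b u (-x.1 v)
      rw [map_neg, (hx u v).2]
  mul_mem' {x y} hx hy u v := by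
    refine ⟨?_, ?_⟩
    · change b (x.1 (y.1 u)) v = x.2 (y.2 (b u v))
      rw [(hx _ v).1, (hy u v).1]
    · change x.2 (y.2 (b u v)) = b u (x.1 (y.1 v))
      rw [(hy u v).2, (hx u _).2]

theorem coe_subring : (subring b : Set (AddMonoid.End V × AddMonoid.End W)) = centroidSet b :=
  rfl

theorem fst_injOn (hgen : AddSubgroup.closure {w : W | ∃ u v : V, w = b u v} = ⊤) :
    Set.InjOn Prod.fst (centroidSet b) := by
  intro x hx y hy h1
  refine Prod.ext h1 (AddMonoidHom.ext_of_closure_range_eq_top hgen fun u v => ?_)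
  exact (hx u v).1.symm.trans (h1 ▸ (hy u v).1)

theorem snd_injOn (hndl : ∀ u : V, (∀ v : V, b u v = 0) → u = 0) :
    Set.InjOn Prod.snd (centroidSet b) := by
  intro x hx y hy h2
  refine Prod.ext (DFunLike.ext _ _ fun u => AddMonoidHom.injective_of_left_nondegenerate hndl ?_) h2
  ext v
  rw [(hx u v).1, (hy u v).1, h2]

theorem snd_mul_comm (hgen : AddSubgroup.closure {w : W | ∃ u v : V, w = b u v} = ⊤)
    {x y : AddMonoid.End V × AddMonoid.End W} (hx : x ∈ centroidSet b) (hy : y ∈ centroidSet b) :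
    x.2 * y.2 = y.2 * x.2 :=
  AddMonoidHom.ext_of_closure_range_eq_top hgen fun u v => calc
    x.2 (y.2 (b u v)) = x.2 (b (y.1 u) v) := by rw [(hy u v).1]
    _ = b (y.1 u) (x.1 v) := (hx _ v).2
    _ = y.2 (b u (x.1 v)) := (hy u _).1
    _ = y.2 (x.2 (b u v)) := by rw [(hx u v).2]

theorem mul_comm (hndl : ∀ u : V, (∀ v : V, b u v = 0) → u = 0)
    (hgen : AddSubgroup.closure {w : W | ∃ u v : V, w = b u v} = ⊤)
    {x y : AddMonoid.End V × AddMonoid.End W} (hx : x ∈ centroidSet b) (hy : y ∈ centroidSet b) :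
    x * y = y * x :=
  snd_injOn hndl ((subring b).mul_mem hx hy) ((subring b).mul_mem hy hx) (snd_mul_comm hgen hx hy)

end centroidSet

theorem centroid_commutative_general
    (V W : Type) [AddCommGroup V] [AddCommGroup W]
    (b : V →+ V →+ W)
    (hndl : ∀ u : V, (∀ v : V, b u v = 0) → u = 0)
    (hgen : AddSubgroup.closure {w : W | ∃ u v : V, w = b u v} = ⊤) :
    (∃ S : Subring (AddMonoid.End V × AddMonoid.End W),
      (S : Set (AddMonoid.End V × AddMonoid.End W)) = centroidSet b) ∧
    (∀ x ∈ centroidSet b, ∀ y ∈ centroidSet b, x * y = y * x) ∧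
    (∀ x ∈ centroidSet b, ∀ y ∈ centroidSet b, x.1 = y.1 → x = y) ∧
    (∀ x ∈ centroidSet b, ∀ y ∈ centroidSet b, x.2 = y.2 → x = y) :=
  ⟨⟨centroidSet.subring b, centroidSet.coe_subring⟩,
    fun _ hx _ hy => centroidSet.mul_comm hndl hgen hx hy,
    fun _ hx _ hy => centroidSet.fst_injOn hgen hx hy,
    fun _ hx _ hy => centroidSet.snd_injOn hndl hx hy⟩

/-- Let `V`, `W` be finite abelian groups and `b : V × V → W` a biadditive
map which is nondegenerate and whose values generate `W`.  Then `Cent(b)` is a commutative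
subring of `End(V) × End(W)`, and both coordinate projections are injective on it. -/
theorem centroid_commutative
    (V W : Type) [AddCommGroup V] [AddCommGroup W] [Finite V] [Finite W]
    (b : V →+ V →+ W)
    (hndl : ∀ u : V, (∀ v : V, b u v = 0) → u = 0)
    (hndr : ∀ v : V, (∀ u : V, b u v = 0) → v = 0)
    (hgen : AddSubgroup.closure {w : W | ∃ u v : V, w = b u v} = ⊤) :
    (∃ S : Subring (AddMonoid.End V × AddMonoid.End W),
      (S : Set (AddMonoid.End V × AddMonoid.End W)) = centroidSet b) ∧
    (∀ x ∈ centroidSet b, ∀ y ∈ centroidSet b, x * y = y * x) ∧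
    (∀ x ∈ centroidSet b, ∀ y ∈ centroidSet b, x.1 = y.1 → x = y) ∧
    (∀ x ∈ centroidSet b, ∀ y ∈ centroidSet b, x.2 = y.2 → x = y) :=
  centroid_commutative_general V W b hndl hgen
end

section
/- Let K be a finite field of characteristic p, V a finite-dimensional K-vector space, j : V × V → K a nondegenerate alternating K-bilinear form, W a nonzero 𝔽_p-vector space, and π : K → W a surjective 𝔽_p-linear map; set b = π∘j. Let A = {f ∈ End_{𝔽_p}(V) : there exists g ∈ End_{𝔽_p}(V) with b(f(u),v) = b(u,g(v)) for all u,v ∈ V} (the restriction to the first coordinate of the adjoint ring Adj(b)). Then A is a subring of End_{𝔽_p}(V) containing End_K(V), A is a simple ring, V is a simple (irreducible) A-module, and the center k of A is a field isomorphic to a subfield of K, with A equal to the full ring End_k(V) of k-linear endomorphisms of V for the induced k-module structure on V. -/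
/-!
Fix a nonzero `𝔽_p`-linear functional `φ` on `K`. The form `(x, y) ↦ φ (x * y)` on `K` is
nondegenerate, so `π x = π y` iff `φ (c * x) = φ (c * y)` for every `c` in the orthogonal `C` of
`ker π`. Hence `f` lies in `A` iff it has a common adjoint for the nondegenerate `𝔽_p`-forms
`φ (c * j u v)`, `c ∈ C`. Fixing `0 ≠ c₀ ∈ C`, these are the forms `φ (c₀ * j u (a • v))` with
`a * c₀ ∈ C`; since multiplication by a scalar is self-adjoint, a common adjoint exists iff `f`
commutes with all these scalars `a`, i.e. iff `f` is linear over the field `k` they generate.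
So `A = End_k(V)`: a matrix ring over `k`, simple with centre `k`, containing `End_K(V)`, which
already acts irreducibly on `V`.
-/

open Module LinearMap
open LinearMap (BilinForm)

section MulForm

variable {F K : Type*} [Field F] [Field K] [Algebra F K]

def mulForm (φ : Dual F K) : BilinForm F K := (LinearMap.mul F K).compr₂ φ

@[simp] lemma mulForm_apply (φ : Dual F K) (x y : K) : mulForm φ x y = φ (x * y) := rfl

lemma mulForm_isRefl (φ : Dual F K) : (mulForm φ).IsRefl := fun x y h => by
  rwa [mulForm_apply, mul_comm] at h

variable {φ : Dual F K}

lemma mulForm_nondegenerate (hφ : φ ≠ 0) : (mulForm φ).Nondegenerate := by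
  have hleft : ∀ x : K, (∀ y, φ (x * y) = 0) → x = 0 := fun x hx => by
    by_contra hx0
    exact hφ (LinearMap.ext fun t => by simpa [mul_inv_cancel_left₀ hx0] using hx (x⁻¹ * t))
  exact ⟨hleft, fun y hy => hleft y fun x => by simpa [mul_comm] using hy x⟩

lemma eq_zero_of_forall_apply_mul_eq_zero {V : Type*} [AddCommGroup V] [Module K V] {c : K}
    (hφ : φ ≠ 0) (hc : c ≠ 0) {ψ : V →ₗ[K] K} (hψ : ∀ v, φ (c * ψ v) = 0) : ψ = 0 := by
  by_contra hψ0
  have hsurj := LinearMap.surjective hψ0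
  refine hc ((mulForm_nondegenerate hφ).1 c fun x => ?_)
  obtain ⟨v, rfl⟩ := hsurj x
  exact hψ v

variable [FiniteDimensional F K] {W : Type*} [AddCommGroup W] [Module F W]

lemma apply_eq_apply_iff_forall_mem_orthogonal_ker (hφ : φ ≠ 0) (π : K →ₗ[F] W) (x y : K) :
    π x = π y ↔ ∀ c ∈ (mulForm φ).orthogonal (ker π), φ (c * x) = φ (c * y) := by
  conv_lhs => rw [← sub_mem_ker_iff, ← BilinForm.orthogonal_orthogonal
    (mulForm_nondegenerate hφ) (mulForm_isRefl φ) (ker π), BilinForm.mem_orthogonal_iff]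
  simp only [mulForm_apply, map_sub, sub_eq_zero]

lemma orthogonal_ker_ne_bot (hφ : φ ≠ 0) {π : K →ₗ[F] W} (hπ : π ≠ 0) :
    (mulForm φ).orthogonal (ker π) ≠ ⊥ := fun h => hπ <| by
  rw [← ker_eq_top, ← BilinForm.orthogonal_orthogonal (mulForm_nondegenerate hφ)
    (mulForm_isRefl φ) (ker π), h, BilinForm.orthogonal_bot]

end MulForm

namespace LinearMap.IsAdjointPair

variable {R M : Type*} [CommRing R] [AddCommGroup M] [Module R M] {B : BilinForm R M}

lemma right_unique (hB : B.Nondegenerate) {f g₁ g₂ : Module.End R M}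
    (h₁ : IsAdjointPair B B f g₁) (h₂ : IsAdjointPair B B f g₂) : g₁ = g₂ :=
  B.flip.isAdjointPair_unique_of_nondegenerate hB.flip f g₁ g₂ (fun x y => (h₁ y x).symm)
    fun x y => (h₂ y x).symm

lemma commute_iff (hB : B.Nondegenerate) {f g s : Module.End R M} (hfg : IsAdjointPair B B f g)
    (hs : IsAdjointPair B B s s) : Commute f s ↔ Commute g s := by
  have h₁ : IsAdjointPair B B (f * s) (s * g) := hfg.mul hs
  have h₂ : IsAdjointPair B B (s * f) (g * s) := hs.mul hfg
  constructor
  · intro hfs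
    rw [← hfs.eq] at h₂
    exact (right_unique hB h₁ h₂).symm
  · intro hgs
    rw [hgs.eq] at h₂
    exact B.isAdjointPair_unique_of_nondegenerate hB _ _ _ h₁ h₂

end LinearMap.IsAdjointPair

lemma LinearMap.BilinForm.exists_isAdjointPair {R M : Type*} [Field R] [AddCommGroup M]
    [Module R M] [FiniteDimensional R M] {B : BilinForm R M} (hB : B.Nondegenerate)
    (f : Module.End R M) :
    ∃ g : Module.End R M, IsAdjointPair B B f g :=
  ⟨B.flip.leftAdjointOfNondegenerate hB.flip f,
    fun x y => (B.flip.isAdjointPairLeftAdjointOfNondegenerate hB.flip f y x).symm⟩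

section PairForm

variable {F K V : Type*} [Field F] [Field K] [Algebra F K]
  [AddCommGroup V] [Module K V] [Module F V] [IsScalarTower F K V]

def pairForm (φ : Dual F K) (j : BilinForm K V) (c : K) : BilinForm F V :=
  (j.restrictScalars₁₂ F F).compr₂ (mulForm φ c)

variable {φ : Dual F K} {j : BilinForm K V} {c : K}

@[simp] lemma pairForm_apply (u v : V) : pairForm φ j c u v = φ (c * j u v) := rfl

lemma isAdjointPair_lsmul (a : K) :
    IsAdjointPair (pairForm φ j c) (pairForm φ j c) (Algebra.lsmul F F V a)
      (Algebra.lsmul F F V a) := fun u v => by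
  simp

lemma pairForm_nondegenerate (hφ : φ ≠ 0) (hj : j.Nondegenerate) (hc : c ≠ 0) :
    (pairForm φ j c).Nondegenerate :=
  ⟨fun u hu => hj.1 u (LinearMap.ext_iff.1 (eq_zero_of_forall_apply_mul_eq_zero hφ hc hu)),
    fun v hv => hj.2 v (LinearMap.ext_iff.1
      (eq_zero_of_forall_apply_mul_eq_zero (ψ := j.flip v) hφ hc hv))⟩

end PairForm

section AdjointRing

variable {F K V W : Type*} [Field F] [Field K] [Algebra F K] [FiniteDimensional F K]
  [AddCommGroup V] [Module K V] [Module F V] [IsScalarTower F K V] [FiniteDimensional F V]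
  [AddCommGroup W] [Module F W]

theorem exists_adjoint_iff_forall_commute {φ : Dual F K} (hφ : φ ≠ 0) {j : BilinForm K V}
    (hj : j.Nondegenerate) {π : K →ₗ[F] W} {c₀ : K} (hc₀ : c₀ ∈ (mulForm φ).orthogonal (ker π))
    (hc₀ne : c₀ ≠ 0) (f : Module.End F V) :
    (∃ g : Module.End F V, ∀ u v, π (j (f u) v) = π (j u (g v))) ↔
      ∀ a, a * c₀ ∈ (mulForm φ).orthogonal (ker π) → Commute f (Algebra.lsmul F F V a) := by
  have hπ := apply_eq_apply_iff_forall_mem_orthogonal_ker hφ π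
  have hB := pairForm_nondegenerate hφ hj hc₀ne
  have htwist : ∀ a u v, φ (a * c₀ * j u v) = pairForm φ j c₀ u (a • v) := fun a u v => by
    simp [mul_left_comm, mul_assoc]
  constructor
  · rintro ⟨g, hg⟩ a ha
    have hfg : IsAdjointPair (pairForm φ j c₀) (pairForm φ j c₀) f g :=
      fun u v => (hπ _ _).1 (hg u v) c₀ hc₀
    rw [hfg.commute_iff hB (isAdjointPair_lsmul a)]
    refine LinearMap.ext fun v => sub_eq_zero.1 <| hB.2 _ fun u => ?_
    have hga := (hπ _ _).1 (hg u v) _ ha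
    rw [htwist, htwist, hfg] at hga
    rw [map_sub, Module.End.mul_apply, Module.End.mul_apply, Algebra.lsmul_coe, hga, sub_self]
  · intro h
    obtain ⟨g, hfg⟩ := (pairForm φ j c₀).exists_isAdjointPair hB f
    refine ⟨g, fun u v => (hπ _ _).2 fun c hc => ?_⟩
    have hc' : c * c₀⁻¹ * c₀ = c := inv_mul_cancel_right₀ hc₀ne c
    have hg := (hfg.commute_iff hB (isAdjointPair_lsmul _)).1 (h _ (hc'.symm ▸ hc))
    rw [← hc', htwist, htwist, hfg]
    exact congrArg (pairForm φ j c₀ u) (LinearMap.congr_fun hg.eq v)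

end AdjointRing

theorem Submodule.eq_bot_or_eq_top_of_forall_linearMap_apply_mem {F V : Type*} [Semiring F]
    (K : Type*) [Field K] [AddCommGroup V] [Module K V] [Module F V] (U : Submodule F V)
    (hU : ∀ g : V →ₗ[K] V, ∀ u ∈ U, g u ∈ U) : U = ⊥ ∨ U = ⊤ := by
  refine or_iff_not_imp_left.2 fun hU0 => eq_top_iff'.2 fun v => ?_
  obtain ⟨x, hxU, hx0⟩ := (Submodule.ne_bot_iff U).1 hU0
  obtain ⟨ψ, hψ⟩ := Projective.exists_dual_eq_one K hx0
  simpa [hψ] using hU (ψ.smulRight v) x hxU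

instance Module.End.isSimpleRing {D V : Type*} [Field D] [AddCommGroup V] [Module D V]
    [FiniteDimensional D V] [Nontrivial V] : IsSimpleRing (Module.End D V) :=
  haveI : Nonempty (Fin (finrank D V)) := ⟨⟨0, finrank_pos⟩⟩
  .of_ringEquiv (algEquivMatrix (finBasis D V)).symm.toRingEquiv inferInstance

section LinearEnd

variable {F K V : Type*} [Field F] [Field K] [Algebra F K]
  [AddCommGroup V] [Module K V] [Module F V] [IsScalarTower F K V]

def commutingScalars (f : Module.End F V) : IntermediateField F K where
  carrier := {a | Commute f (Algebra.lsmul F F V a)}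
  mul_mem' ha hb := by simpa only [Set.mem_ofPred_eq, map_mul] using ha.mul_right hb
  add_mem' ha hb := by simpa only [Set.mem_ofPred_eq, map_add] using ha.add_right hb
  algebraMap_mem' c := by
    simpa only [Set.mem_ofPred_eq, AlgHom.commutes] using Algebra.commute_algebraMap_right c f
  inv_mem' a ha := by
    rcases eq_or_ne a 0 with rfl | ha0
    · simp
    · let u := Units.map (Algebra.lsmul F F V).toMonoidHom (Units.mk0 a ha0)
      simpa [u] using (show Commute f u from ha).units_inv_right

variable (V) in
def linearEndSubring (k : IntermediateField F K) : Subring (Module.End F V) where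
  carrier := {f | k ≤ commutingScalars f}
  mul_mem' hf hg _ ha := (hf ha).mul_left (hg ha)
  one_mem' _ _ := Commute.one_left _
  add_mem' hf hg _ ha := (hf ha).add_left (hg ha)
  zero_mem' _ _ := Commute.zero_left _
  neg_mem' hf _ ha := (hf ha).neg_left

variable (k : IntermediateField F K)

lemma mem_linearEndSubring {f : Module.End F V} :
    f ∈ linearEndSubring V k ↔ k ≤ commutingScalars f := Iff.rfl

lemma lsmul_mem_linearEndSubring (a : K) : Algebra.lsmul F F V a ∈ linearEndSubring V k :=
  fun b _ => (Commute.all a b).map (Algebra.lsmul F F V)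

lemma restrictScalars_mem_linearEndSubring (g : V →ₗ[K] V) :
    g.restrictScalars F ∈ linearEndSubring V k :=
  fun a _ => LinearMap.ext fun v => g.map_smul a v

instance : IsScalarTower F k V := IsScalarTower.of_algebraMap_smul fun c v => algebraMap_smul K c v

variable (V) in
def linearEndSubringEquiv : linearEndSubring V k ≃+* Module.End k V where
  toFun f :=
    { toFun := f
      map_add' := map_add f.1
      map_smul' a v := LinearMap.congr_fun (f.2 a.2).eq v }
  invFun g := ⟨g.restrictScalars F, fun a ha => LinearMap.ext fun v => g.map_smul ⟨a, ha⟩ v⟩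
  left_inv _ := rfl
  right_inv _ := rfl
  map_mul' _ _ := rfl
  map_add' _ _ := rfl

instance [FiniteDimensional k V] [Nontrivial V] : IsSimpleRing (linearEndSubring V k) :=
  .of_ringEquiv (linearEndSubringEquiv V k).symm inferInstance

variable (V) in
noncomputable def centerLinearEndSubringEquiv [Nontrivial V] :
    Subring.center (linearEndSubring V k) ≃+* k :=
  (Subring.centerCongr (linearEndSubringEquiv V k)).trans <|
    (RingEquiv.subringCongr (by
      rw [← Subalgebra.center_toSubring k, Algebra.IsCentral.center_eq_bot])).trans
      (Algebra.botEquiv k (Module.End k V)).toRingEquiv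

lemma mem_linearEndSubring_iff_forall_commute_center (f : Module.End F V) :
    f ∈ linearEndSubring V k ↔ ∀ z : linearEndSubring V k,
      z ∈ Subring.center (linearEndSubring V k) → (z : Module.End F V) * f = f * z := by
  refine ⟨fun hf z hz => congrArg Subtype.val (Subring.mem_center_iff.1 hz ⟨f, hf⟩).symm,
    fun h a ha => (h ⟨_, lsmul_mem_linearEndSubring k a⟩ ?_).symm⟩
  exact Subring.mem_center_iff.2 fun g => Subtype.ext (g.2 ha).eq

end LinearEnd

theorem adjoint_ring_of_quotient_form_general
    (p : ℕ) [Fact p.Prime] (K V W : Type)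
    [Field K] [Fintype K] [Module (ZMod p) K]
    [AddCommGroup V] [Module K V] [FiniteDimensional K V] [Nontrivial V]
    [Module (ZMod p) V]
    [AddCommGroup W] [Module (ZMod p) W] [Nontrivial W]
    (j : V →ₗ[K] V →ₗ[K] K)
    (hndl : ∀ u : V, (∀ v : V, j u v = 0) → u = 0)
    (hndr : ∀ v : V, (∀ u : V, j u v = 0) → v = 0)
    (π : K →ₗ[ZMod p] W) (hπ : Function.Surjective π) :
    ∃ S : Subring (Module.End (ZMod p) V),
      (S : Set (Module.End (ZMod p) V)) =
        {f : Module.End (ZMod p) V | ∃ g : Module.End (ZMod p) V,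
          ∀ u v : V, π (j (f u) v) = π (j u (g v))} ∧
      (∀ fK : V →ₗ[K] V, ∃ f ∈ S, ∀ v : V, f v = fK v) ∧
      IsSimpleRing ↥S ∧
      (∀ U : Submodule (ZMod p) V,
        (∀ f ∈ S, ∀ u ∈ U, f u ∈ U) → U = ⊥ ∨ U = ⊤) ∧
      IsField (Subring.center ↥S) ∧
      (∃ ι : Subring.center ↥S →+* K, Function.Injective ι) ∧
      (∀ f : Module.End (ZMod p) V,
        f ∈ S ↔ ∀ z : ↥S, z ∈ Subring.center ↥S →
          (z : Module.End (ZMod p) V) * f = f * (z : Module.End (ZMod p) V)) := by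
  -- Additive maps are `ZMod p`-linear, so the given `ZMod p`-structures are compatible with `K`.
  let : Algebra (ZMod p) K := Algebra.ofModule
    (fun c x y => ZMod.map_smul (AddMonoidHom.mulRight y) c x)
    (fun c x y => ZMod.map_smul (AddMonoidHom.mulLeft x) c y)
  have : IsScalarTower (ZMod p) K V := ⟨fun c a v => ZMod.map_smul ((smulAddHom K V).flip v) c a⟩
  have : Finite V := Module.finite_of_finite K
  obtain ⟨φ, hφ⟩ := exists_ne (0 : Dual (ZMod p) K)
  obtain ⟨c₀, hc₀, hc₀ne⟩ :=
    (Submodule.ne_bot_iff _).1 (orthogonal_ker_ne_bot hφ (ne_zero_of_surjective hπ))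
  let k := IntermediateField.adjoin (ZMod p) {a | a * c₀ ∈ (mulForm φ).orthogonal (ker π)}
  refine ⟨linearEndSubring V k, ?_,
    fun fK => ⟨_, restrictScalars_mem_linearEndSubring k fK, fun _ => rfl⟩, inferInstance,
    fun U hU => ?_, ?_, ?_, mem_linearEndSubring_iff_forall_commute_center k⟩
  · ext f
    rw [SetLike.mem_coe, mem_linearEndSubring, IntermediateField.adjoin_le_iff, Set.mem_ofPred_eq,
      exists_adjoint_iff_forall_commute hφ ⟨hndl, hndr⟩ hc₀ hc₀ne]
    rfl
  · exact U.eq_bot_or_eq_top_of_forall_linearMap_apply_mem K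
      fun g => hU _ (restrictScalars_mem_linearEndSubring k g)
  · exact (centerLinearEndSubringEquiv V k).toMulEquiv.isField (Field.toIsField k)
  · exact ⟨k.val.toRingHom.comp (centerLinearEndSubringEquiv V k).toRingHom,
      Subtype.val_injective.comp (centerLinearEndSubringEquiv V k).injective⟩

/-- Let `K` be a finite field of characteristic `p`, `V ≠ 0` a
finite-dimensional `K`-vector space, `j` a nondegenerate alternating `K`-form on `V`,
`W ≠ 0` an `𝔽_p`-space and `π : K → W` a surjective `𝔽_p`-linear map; put `b = π∘j`.
Let `A = {f ∈ End_{𝔽_p}(V) | ∃ g, b(f u, v) = b(u, g v)}` (the adjoint ring of `b` in its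
first coordinate).  Then `A` is a subring of `End_{𝔽_p}(V)` containing `End_K(V)`, `A` is a
simple ring, `V` is an irreducible `A`-module, the center `k` of `A` is a field embedding
into `K`, and `A` is the full ring of `k`-linear endomorphisms of `V`
(i.e. `A` consists exactly of the `𝔽_p`-endomorphisms commuting with its center). -/
theorem adjoint_ring_of_quotient_form
    (p : ℕ) [Fact p.Prime] (K V W : Type)
    [Field K] [Fintype K] [CharP K p] [Module (ZMod p) K]
    [AddCommGroup V] [Module K V] [FiniteDimensional K V] [Nontrivial V]
    [Module (ZMod p) V]
    [AddCommGroup W] [Module (ZMod p) W] [Nontrivial W]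
    (j : V →ₗ[K] V →ₗ[K] K)
    (halt : ∀ v : V, j v v = 0)
    (hndl : ∀ u : V, (∀ v : V, j u v = 0) → u = 0)
    (hndr : ∀ v : V, (∀ u : V, j u v = 0) → v = 0)
    (π : K →ₗ[ZMod p] W) (hπ : Function.Surjective π) :
    ∃ S : Subring (Module.End (ZMod p) V),
      (S : Set (Module.End (ZMod p) V)) =
        {f : Module.End (ZMod p) V | ∃ g : Module.End (ZMod p) V,
          ∀ u v : V, π (j (f u) v) = π (j u (g v))} ∧
      (∀ fK : V →ₗ[K] V, ∃ f ∈ S, ∀ v : V, f v = fK v) ∧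
      IsSimpleRing ↥S ∧
      (∀ U : Submodule (ZMod p) V,
        (∀ f ∈ S, ∀ u ∈ U, f u ∈ U) → U = ⊥ ∨ U = ⊤) ∧
      IsField (Subring.center ↥S) ∧
      (∃ ι : Subring.center ↥S →+* K, Function.Injective ι) ∧
      (∀ f : Module.End (ZMod p) V,
        f ∈ S ↔ ∀ z : ↥S, z ∈ Subring.center ↥S →
          (z : Module.End (ZMod p) V) * f = f * (z : Module.End (ZMod p) V)) :=
  adjoint_ring_of_quotient_form_general p K V W j hndl hndr π hπ
end

section
/- Let K be a finite field of characteristic p, V a finite-dimensional K-vector space, and j : V × V → K a nondegenerate alternating K-bilinear form. Suppose φ : V → V and φ̂ : K → K are 𝔽_p-linear bijections with j(φ(u), φ(v)) = φ̂(j(u,v)) for all u, v ∈ V. Then there exists a field automorphism σ ∈ Gal(K/𝔽_p) such that φ is σ-semilinear, i.e. φ(s·u) = σ(s)·φ(u) for all s ∈ K, u ∈ V, and φ̂(t) = σ(t)·φ̂(1) for all t ∈ K, where φ̂(1) ∈ K^×. -/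
/-!
Fix `u, v` with `j u v = 1`. For `t ∈ K` the vector
`φ⁻¹ (t • φ v)` pairs with any `x` to give `φ̂⁻¹ (t · φ̂ (j x v))`; choosing `t = φ̂ r / φ̂ 1` and
pairing with `u` and `s • u` yields `φ̂ (s r) φ̂ 1 = φ̂ s φ̂ r`. Hence `σ t = φ̂ t / φ̂ 1` is a ring
automorphism of `K`, and nondegeneracy of `j` turns
`j (φ (s • u)) (φ w) = σ s · j (φ u) (φ w)` into `φ (s • u) = σ s • φ u`.
-/

variable {K V : Type*} [Field K] [AddCommGroup V] [Module K V]

def AddEquiv.ringEquivOfMapMul (ψ : K ≃+ K) (hψ : ∀ s r, ψ (s * r) * ψ 1 = ψ s * ψ r) :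
    K ≃+* K where
  toFun a := ψ a / ψ 1
  invFun b := ψ.symm (b * ψ 1)
  left_inv a := by simp
  right_inv b := by simp
  map_mul' s r := by
    have hψ1 : ψ 1 ≠ 0 := by simp
    rw [div_mul_div_comm, ← hψ, mul_div_mul_right _ _ hψ1]
  map_add' a b := by rw [map_add, add_div]

@[simp]
theorem AddEquiv.ringEquivOfMapMul_apply (ψ : K ≃+ K) (hψ : ∀ s r, ψ (s * r) * ψ 1 = ψ s * ψ r)
    (a : K) : ψ.ringEquivOfMapMul hψ a = ψ a / ψ 1 :=
  rfl

namespace LinearMap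

theorem SeparatingLeft.exists_apply_eq_one [Nontrivial V] {j : V →ₗ[K] V →ₗ[K] K}
    (hj : j.SeparatingLeft) : ∃ u v, j u v = 1 := by
  obtain ⟨u, hu⟩ := exists_ne (0 : V)
  obtain ⟨v, hv⟩ : ∃ v, j u v ≠ 0 := by
    by_contra! h0
    exact hu (hj u h0)
  exact ⟨u, (j u v)⁻¹ • v, by rw [map_smul, smul_eq_mul, inv_mul_cancel₀ hv]⟩

def IsPseudoIsometry (j : V →ₗ[K] V →ₗ[K] K) (φ : V ≃+ V) (ψ : K ≃+ K) : Prop :=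
  ∀ u v, j (φ u) (φ v) = ψ (j u v)

namespace IsPseudoIsometry

variable {j : V →ₗ[K] V →ₗ[K] K} {φ : V ≃+ V} {ψ : K ≃+ K}

theorem map_smul_left (h : j.IsPseudoIsometry φ ψ) (s : K) (u v : V) :
    j (φ (s • u)) (φ v) = ψ (s * j u v) := by
  rw [h, map_smul₂, smul_eq_mul]

theorem map_symm_smul_right (h : j.IsPseudoIsometry φ ψ) (t : K) (u v : V) :
    ψ (j u (φ.symm (t • φ v))) = t * ψ (j u v) := by
  rw [← h, φ.apply_symm_apply, map_smul, smul_eq_mul, h]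

theorem map_mul_mul_map_one [Nontrivial V] (h : j.IsPseudoIsometry φ ψ) (hj : j.SeparatingLeft)
    (s r : K) : ψ (s * r) * ψ 1 = ψ s * ψ r := by
  obtain ⟨u, v, huv⟩ := hj.exists_apply_eq_one
  have hψ1 : ψ 1 ≠ 0 := by simp
  have hv' : j u (φ.symm ((ψ r / ψ 1) • φ v)) = r := ψ.injective <| by
    rw [h.map_symm_smul_right, huv, div_mul_cancel₀ _ hψ1]
  have hsu := h.map_symm_smul_right (ψ r / ψ 1) (s • u) v
  rw [map_smul₂, smul_eq_mul, hv', map_smul₂, smul_eq_mul, huv, mul_one] at hsu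
  rw [hsu, div_mul_eq_mul_div, div_mul_cancel₀ _ hψ1, mul_comm]

theorem map_smul [Nontrivial V] (h : j.IsPseudoIsometry φ ψ) (hj : j.SeparatingLeft)
    (s : K) (u : V) : φ (s • u) = (ψ s / ψ 1) • φ u := by
  rw [← sub_eq_zero]
  refine hj _ fun w => ?_
  obtain ⟨v, rfl⟩ := φ.surjective w
  have hψ1 : ψ 1 ≠ 0 := by simp
  rw [map_sub, sub_apply, h.map_smul_left, map_smul₂, h, smul_eq_mul, sub_eq_zero,
    div_mul_eq_mul_div, eq_div_iff hψ1, h.map_mul_mul_map_one hj]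

end IsPseudoIsometry

end LinearMap

theorem pseudo_isometry_semilinear_general
    (p : ℕ) (K V : Type)
    [Field K] [Module (ZMod p) K]
    [AddCommGroup V] [Module K V] [Nontrivial V]
    [Module (ZMod p) V]
    (j : V →ₗ[K] V →ₗ[K] K)
    (hndl : ∀ u : V, (∀ v : V, j u v = 0) → u = 0)
    (φ : V ≃ₗ[ZMod p] V) (φhat : K ≃ₗ[ZMod p] K)
    (h : ∀ u v : V, j (φ u) (φ v) = φhat (j u v)) :
    ∃ σ : K ≃+* K,
      (∀ (s : K) (u : V), φ (s • u) = σ s • φ u) ∧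
      (∀ t : K, φhat t = σ t * φhat 1) ∧
      φhat 1 ≠ 0 := by
  have hpi : j.IsPseudoIsometry φ.toAddEquiv φhat.toAddEquiv := h
  have hφhat1 : φhat 1 ≠ 0 := by simp
  refine ⟨φhat.toAddEquiv.ringEquivOfMapMul (hpi.map_mul_mul_map_one hndl), hpi.map_smul hndl,
    fun t => ?_, hφhat1⟩
  simp [div_mul_cancel₀ _ hφhat1]

/-- Let `K` be a finite field of characteristic `p`, `V ≠ 0` a
finite-dimensional `K`-vector space, and `j` a nondegenerate alternating `K`-bilinear form on
`V`.  If `(φ, φ̂)` is an `𝔽_p`-linear pseudo-isometry of `j`, then `φ` is semilinear over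
some field automorphism `σ` of `K`, and `φ̂(t) = σ(t)·φ̂(1)` for all `t`, with `φ̂(1) ≠ 0`. -/
theorem pseudo_isometry_semilinear
    (p : ℕ) [Fact p.Prime] (K V : Type)
    [Field K] [Fintype K] [CharP K p] [Module (ZMod p) K]
    [AddCommGroup V] [Module K V] [FiniteDimensional K V] [Nontrivial V]
    [Module (ZMod p) V]
    (j : V →ₗ[K] V →ₗ[K] K)
    (halt : ∀ v : V, j v v = 0)
    (hndl : ∀ u : V, (∀ v : V, j u v = 0) → u = 0)
    (hndr : ∀ v : V, (∀ u : V, j u v = 0) → v = 0)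
    (φ : V ≃ₗ[ZMod p] V) (φhat : K ≃ₗ[ZMod p] K)
    (h : ∀ u v : V, j (φ u) (φ v) = φhat (j u v)) :
    ∃ σ : K ≃+* K,
      (∀ (s : K) (u : V), φ (s • u) = σ s • φ u) ∧
      (∀ t : K, φhat t = σ t * φhat 1) ∧
      φhat 1 ≠ 0 :=
  pseudo_isometry_semilinear_general p K V j hndl φ φhat h
end
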